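/- arXiv:math/0608664 — 6 statements merged into one kernel-verified Lean document; each statement's English description precedes it below -/
import Mathlib

section
/- Let G = (Z/p^k Z)^m and let (.,.): G × G → Z/p^k Z be an alternating bilinear form. Then there exist a natural number g and a monomorphism φ: G → (Z/p^k Z)^{2g} such that (a, b) = (φ(a), φ(b))_{p^k} for all a, b ∈ G, where (.,.)_{p^k} is the standard symplectic form on (Z/p^k Z)^{2g}. -/
open scoped Matrix

def sympJ (g : ℕ) (R : Type) [CommRing R] : Matrix (Fin (2*g)) (Fin (2*g)) R :=
  fun i j => if (i : ℕ) + (j : ℕ) = 2*g - 1 then (if (i : ℕ) < (j : ℕ) then 1 else -1) else 0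

def symp (g : ℕ) (R : Type) [CommRing R] (x y : Fin (2*g) → R) : R :=
  x ⬝ᵥ (sympJ g R).mulVec y

/-!
Over any commutative ring `R`, the Gram matrix `M` of an alternating form on `R^m` is skew with
zero diagonal, so `M = N - Nᵀ` for its strictly upper triangular part `N`, i.e.
`B a b = a ⬝ᵥ N b - N a ⬝ᵥ b`. The standard symplectic form pairs coordinate `i` with `2g - 1 - i`,
so on vectors `(u, rev v)` and `(u', rev v')` it equals `u ⬝ᵥ v' - v ⬝ᵥ u'`. Hence
`a ↦ (a, rev (N a))` is an isometric embedding `R^m → R^{2m}`, injective because it keeps `a` as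
its first half.
-/

open Matrix

section Symplectic

variable {R : Type} [CommRing R] {g : ℕ}

theorem sympJ_apply (i j : Fin (2*g)) :
    sympJ g R i j = if j = i.rev then (if i < j then 1 else -1) else 0 := by
  have : (i : ℕ) + j = 2*g - 1 ↔ j = i.rev := by rw [Fin.ext_iff, Fin.val_rev]; omega
  simp only [sympJ, this, Fin.lt_def]

theorem sympJ_mulVec_apply (y : Fin (2*g) → R) (i : Fin (2*g)) :
    (sympJ g R *ᵥ y) i = (if i < i.rev then 1 else -1) * y i.rev := by
  simp [mulVec, dotProduct, sympJ_apply, ite_mul]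

/-- `u` and `v` placed so that the coordinates `i` and `2g - 1 - i`, which the standard symplectic
form pairs, carry `u i` and `v i`. -/
def pairVec {α : Type*} (u v : Fin g → α) : Fin (2*g) → α :=
  fun j => Fin.append u (v ∘ Fin.rev) (j.cast (two_mul g))

theorem pairVec_add {α : Type*} [Add α] (u v u' v' : Fin g → α) :
    pairVec (u + u') (v + v') = pairVec u v + pairVec u' v' := by
  ext j
  simp only [pairVec, Pi.add_apply]
  induction j.cast (two_mul g) using Fin.addCases <;>
    simp only [Fin.append_left, Fin.append_right, Pi.add_apply, Function.comp_apply]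

theorem pairVec_smul {S α : Type*} [SMul S α] (c : S) (u v : Fin g → α) :
    pairVec (c • u) (c • v) = c • pairVec u v := by
  ext j
  simp only [pairVec, Pi.smul_apply]
  induction j.cast (two_mul g) using Fin.addCases <;>
    simp only [Fin.append_left, Fin.append_right, Pi.smul_apply, Function.comp_apply]

theorem pairVec_castAdd {α : Type*} (u v : Fin g → α) (i : Fin g) :
    pairVec u v ((Fin.castAdd g i).cast (two_mul g).symm) = u i := by
  simp only [pairVec, Fin.cast_cast, Fin.cast_eq_self, Fin.append_left]

theorem pairVec_natAdd {α : Type*} (u v : Fin g → α) (i : Fin g) :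
    pairVec u v ((Fin.natAdd g i).cast (two_mul g).symm) = v i.rev := by
  simp only [pairVec, Fin.cast_cast, Fin.cast_eq_self, Fin.append_right, Function.comp_apply]

theorem Fin.rev_cast_castAdd (i : Fin g) :
    ((Fin.castAdd g i).cast (two_mul g).symm).rev = (Fin.natAdd g i.rev).cast (two_mul g).symm := by
  ext; simp only [Fin.val_rev, Fin.val_cast, Fin.val_castAdd, Fin.val_natAdd]; omega

theorem Fin.rev_cast_natAdd (i : Fin g) :
    ((Fin.natAdd g i).cast (two_mul g).symm).rev = (Fin.castAdd g i.rev).cast (two_mul g).symm := by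
  ext; simp only [Fin.val_rev, Fin.val_cast, Fin.val_castAdd, Fin.val_natAdd]; omega

theorem symp_pairVec (u v u' v' : Fin g → R) :
    symp g R (pairVec u v) (pairVec u' v') = u ⬝ᵥ v' - v ⬝ᵥ u' := by
  rw [symp, dotProduct, ← Fin.sum_congr' _ (two_mul g).symm, Fin.sum_univ_add]
  have first_half_lt (i : Fin g) :
      (Fin.castAdd g i).cast (two_mul g).symm < (Fin.natAdd g i.rev).cast (two_mul g).symm := by
    simp only [Fin.lt_def, Fin.val_cast, Fin.val_castAdd, Fin.val_natAdd]; omega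
  have second_half_not_lt (i : Fin g) :
      ¬ (Fin.natAdd g i).cast (two_mul g).symm < (Fin.castAdd g i.rev).cast (two_mul g).symm := by
    simp only [Fin.lt_def, Fin.val_cast, Fin.val_castAdd, Fin.val_natAdd]; omega
  simp only [sympJ_mulVec_apply, Fin.rev_cast_castAdd, Fin.rev_cast_natAdd, pairVec_castAdd,
    pairVec_natAdd, Fin.rev_rev, first_half_lt, second_half_not_lt, if_true, if_false, one_mul,
    neg_one_mul, mul_neg, Finset.sum_neg_distrib, dotProduct, ← sub_eq_add_neg]
  congr 1
  exact Fintype.sum_equiv Fin.revPerm _ _ fun _ => rfl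

end Symplectic

def Matrix.strictUpperPart {n α : Type*} [LinearOrder n] [Zero α] (M : Matrix n n α) :
    Matrix n n α :=
  fun i j => if i < j then M i j else 0

theorem Matrix.strictUpperPart_sub_transpose {n α : Type*} [LinearOrder n] [AddCommGroup α]
    {M : Matrix n n α} (hskew : Mᵀ = -M) (hdiag : ∀ i, M i i = 0) :
    M.strictUpperPart - M.strictUpperPartᵀ = M := by
  ext i j
  have hji : M j i = -M i j := congrFun₂ hskew i j
  rcases lt_trichotomy i j with h | rfl | h
  · simp [strictUpperPart, h, h.not_gt]
  · simp [strictUpperPart, hdiag]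
  · simp [strictUpperPart, h, h.not_gt, hji]

section AlternatingForm

variable {R : Type} [CommRing R] {m : ℕ}

theorem LinearMap.IsAlt.apply_eq_dotProduct_strictUpperPart
    {B : (Fin m → R) →ₗ[R] (Fin m → R) →ₗ[R] R} (hB : B.IsAlt) (a b : Fin m → R) :
    B a b = a ⬝ᵥ (LinearMap.toMatrix₂' R B).strictUpperPart *ᵥ b -
      (LinearMap.toMatrix₂' R B).strictUpperPart *ᵥ a ⬝ᵥ b := by
  set M := LinearMap.toMatrix₂' R B
  have hskew : Mᵀ = -M := by ext i j; exact (hB.neg _ _).symm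
  have hdiag (i : Fin m) : M i i = 0 := hB _
  have hBM : B a b = a ⬝ᵥ M *ᵥ b := by
    conv_lhs => rw [← Matrix.toLinearMap₂'_toMatrix' (R := R) B]
    exact Matrix.toLinearMap₂'_apply' _ _ _
  conv_lhs => rw [hBM, ← Matrix.strictUpperPart_sub_transpose hskew hdiag]
  rw [sub_mulVec, dotProduct_sub, dotProduct_mulVec a M.strictUpperPartᵀ, vecMul_transpose,
    dotProduct_comm]

def symplecticEmbedding (N : Matrix (Fin m) (Fin m) R) : (Fin m → R) →ₗ[R] (Fin (2*m) → R) where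
  toFun a := pairVec a (N *ᵥ a)
  map_add' a b := by rw [mulVec_add, pairVec_add]
  map_smul' c a := by rw [mulVec_smul, pairVec_smul]; rfl

theorem symplecticEmbedding_injective (N : Matrix (Fin m) (Fin m) R) :
    Function.Injective (symplecticEmbedding N) := fun a b hab => funext fun i => by
  simpa only [symplecticEmbedding, LinearMap.coe_mk, AddHom.coe_mk, pairVec_castAdd] using
    congrFun hab ((Fin.castAdd m i).cast (two_mul m).symm)

theorem symp_symplecticEmbedding (N : Matrix (Fin m) (Fin m) R) (a b : Fin m → R) :
    symp m R (symplecticEmbedding N a) (symplecticEmbedding N b) = a ⬝ᵥ N *ᵥ b - N *ᵥ a ⬝ᵥ b :=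
  symp_pairVec _ _ _ _

theorem LinearMap.IsAlt.exists_injective_symp {B : (Fin m → R) →ₗ[R] (Fin m → R) →ₗ[R] R}
    (hB : B.IsAlt) :
    ∃ φ : (Fin m → R) →ₗ[R] (Fin (2*m) → R),
      Function.Injective φ ∧ ∀ a b, B a b = symp m R (φ a) (φ b) :=
  ⟨_, symplecticEmbedding_injective _, fun a b => by
    rw [symp_symplecticEmbedding, hB.apply_eq_dotProduct_strictUpperPart]⟩

end AlternatingForm

theorem stmt4_general (p k m : ℕ)
    (B : (Fin m → ZMod (p^k)) →ₗ[ZMod (p^k)] (Fin m → ZMod (p^k)) →ₗ[ZMod (p^k)] ZMod (p^k))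
    (hB : ∀ a, B a a = 0) :
    ∃ (g : ℕ) (φ : (Fin m → ZMod (p^k)) →ₗ[ZMod (p^k)] (Fin (2*g) → ZMod (p^k))),
      Function.Injective φ ∧ ∀ a b, B a b = symp g (ZMod (p^k)) (φ a) (φ b) :=
  ⟨m, LinearMap.IsAlt.exists_injective_symp hB⟩

/-- Every alternating bilinear form on `G = (ℤ/p^kℤ)^m` is induced, via some monomorphism
`φ : G → (ℤ/p^kℤ)^{2g}`, by the standard symplectic form on `(ℤ/p^kℤ)^{2g}`. -/
theorem stmt4 (p k m : ℕ) (hp : p.Prime) (hk : 1 ≤ k) (hm : 1 ≤ m)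
    (B : (Fin m → ZMod (p^k)) →ₗ[ZMod (p^k)] (Fin m → ZMod (p^k)) →ₗ[ZMod (p^k)] ZMod (p^k))
    (hB : ∀ a, B a a = 0) :
    ∃ (g : ℕ) (φ : (Fin m → ZMod (p^k)) →ₗ[ZMod (p^k)] (Fin (2*g) → ZMod (p^k))),
      Function.Injective φ ∧ ∀ a b, B a b = symp g (ZMod (p^k)) (φ a) (φ b) :=
  stmt4_general p k m B hB
end

section
/- Let G = (Z/p^k Z)^m with an alternating bilinear form (.,.): G × G → Z/p^k Z. For 1 ≤ i ≤ k, let q_i be the dimension of the F_p-vector space μ({h ∈ G : (h, x) ≡ 0 mod p^i for all x ∈ G}), where μ: (Z/p^k Z)^m → F_p^m is the map induced by v ↦ p^{k-1} v. Then 0 ≤ q_k ≤ q_{k-1} ≤ ... ≤ q_1 ≤ m and q_i ≡ m (mod 2) for all i. -/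
/-!
Over `R = ℤ/p^kℤ` an alternating form splits off hyperbolic planes. If `p^e` is the largest
power of `p` dividing every value of `B` and `B x y = p^e u` with `u` a unit, then `x`, `y` are
independent mod `p`, and they extend to a basis `x, y, v_j` of `R^ι` in which every `v_j` is
`B`-orthogonal to `x` and `y` (that this is a basis is seen mod `p` and lifted by Nakayama's lemma).
In this basis `B` is the orthogonal sum of the plane `p^e u (e_a^* ∧ e_b^*)` and of a form `B'` in
two fewer variables. When `e < i` the plane contributes nothing to the reduction mod `p` of the
`p^i`-radical, so `q_i(B) = q_i(B')`; when `p^i` divides every value of `B`, `q_i(B)` is the rank.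
Induction on the rank gives `q_i ≡ m (mod 2)`; the bounds and the monotonicity in `i` are immediate.
-/

open scoped Matrix

/-- The `i`-th invariant of an alternating bilinear form `B` on `(ℤ/p^kℤ)^m`: the
`𝔽_p`-dimension of the image under `μ : v ↦ p^{k-1}v` (identified with reduction mod `p`)
of the set of `h` with `B(h, x) ≡ 0 mod p^i` for all `x`. -/
noncomputable def qinv (p k m : ℕ)
    (B : (Fin m → ZMod (p^k)) →ₗ[ZMod (p^k)] (Fin m → ZMod (p^k)) →ₗ[ZMod (p^k)] ZMod (p^k))
    (i : ℕ) : ℕ :=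
  Module.finrank (ZMod p) (Submodule.span (ZMod p)
    (Set.image (fun h : Fin m → ZMod (p^k) => fun j => (((h j).val : ℕ) : ZMod p))
      {h | ∀ x, ∃ c, B h x = (p : ZMod (p^k))^i * c}))

namespace AlternatingModPrimePow

section General

variable {R ι : Type*} [CommRing R]

lemma exists_linearMap_eq_mul [Fintype ι] [DecidableEq ι] {d : R} (f : (ι → R) →ₗ[R] R)
    (hf : ∀ v, d ∣ f v) : ∃ g : (ι → R) →ₗ[R] R, ∀ v, f v = d * g v := by
  choose c hc using fun i => hf fun j => if i = j then 1 else 0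
  refine ⟨∑ i, c i • LinearMap.proj i, fun v => ?_⟩
  rw [LinearMap.pi_apply_eq_sum_univ f v, LinearMap.sum_apply, Finset.mul_sum]
  refine Finset.sum_congr rfl fun i _ => ?_
  rw [hc, LinearMap.smul_apply, LinearMap.proj_apply, smul_eq_mul, smul_eq_mul]
  ring

lemma eq_zero_of_mul_add_mul_eq_zero {K : Type*} [Field K] {s t xa ya xb yb : K}
    (hdet : xa * yb - xb * ya ≠ 0) (ha : s * xa + t * ya = 0) (hb : s * xb + t * yb = 0) :
    s = 0 ∧ t = 0 := by
  refine ⟨(mul_eq_zero.mp ?_).resolve_right hdet, (mul_eq_zero.mp ?_).resolve_right hdet⟩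
  · linear_combination yb * ha - ya * hb
  · linear_combination xa * hb - xb * ha

lemma exists_mul_sub_mul_ne_zero {K : Type*} [Field K] {v w : ι → K}
    (h : LinearIndependent K ![v, w]) : ∃ a b, v a * w b - v b * w a ≠ 0 := by
  by_contra! hvw
  obtain ⟨a, ha⟩ := Function.ne_iff.mp (h.ne_zero 0)
  have := (LinearIndependent.pair_iff.mp h (w a) (-v a) (funext fun b => by
    simp only [Pi.add_apply, Pi.smul_apply, smul_eq_mul, Pi.zero_apply]
    linear_combination -hvw a b)).2
  exact ha (neg_eq_zero.mp this)

lemma extendByZero_compl_apply_of_mem {s : Finset ι} (z : {j // j ∉ s} → R) {c : ι} (hc : c ∈ s) :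
    Function.ExtendByZero.linearMap R Subtype.val z c = 0 :=
  Function.extend_apply' _ _ _ fun ⟨j, hj⟩ => j.2 (hj ▸ hc)

lemma extendByZero_compl_apply_val {s : Finset ι} (z : {j // j ∉ s} → R) (j : {j // j ∉ s}) :
    Function.ExtendByZero.linearMap R Subtype.val z j = z j :=
  Subtype.val_injective.extend_apply _ _ j

variable [DecidableEq ι] (a b : ι)

def IsBlockSum (B₀ : (ι → R) →ₗ[R] (ι → R) →ₗ[R] R)
    (B' : ({j // j ∉ ({a, b} : Finset ι)} → R) →ₗ[R] ({j // j ∉ ({a, b} : Finset ι)} → R) →ₗ[R] R)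
    (c : R) : Prop :=
  ∀ g g', B₀ g g' = c * (g a * g' b - g b * g' a) + B' (fun j => g j) (fun j => g' j)

section IsBlockSum

variable {a b} {B₀ : (ι → R) →ₗ[R] (ι → R) →ₗ[R] R}
  {B' : ({j // j ∉ ({a, b} : Finset ι)} → R) →ₗ[R] ({j // j ∉ ({a, b} : Finset ι)} → R) →ₗ[R] R}
  {c : R}

lemma IsBlockSum.apply_extendByZero_left (hB₀ : IsBlockSum a b B₀ B' c)
    (z : {j // j ∉ ({a, b} : Finset ι)} → R) (g : ι → R) :
    B₀ (Function.ExtendByZero.linearMap R Subtype.val z) g = B' z (fun j => g j) := by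
  rw [hB₀, extendByZero_compl_apply_of_mem z (by simp : a ∈ ({a, b} : Finset ι)),
    extendByZero_compl_apply_of_mem z (by simp : b ∈ ({a, b} : Finset ι)),
    funext (extendByZero_compl_apply_val z)]
  ring

lemma IsBlockSum.apply_extendByZero_right (hB₀ : IsBlockSum a b B₀ B' c) (g : ι → R)
    (z : {j // j ∉ ({a, b} : Finset ι)} → R) :
    B₀ g (Function.ExtendByZero.linearMap R Subtype.val z) = B' (fun j => g j) z := by
  rw [hB₀, extendByZero_compl_apply_of_mem z (by simp : a ∈ ({a, b} : Finset ι)),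
    extendByZero_compl_apply_of_mem z (by simp : b ∈ ({a, b} : Finset ι)),
    funext (extendByZero_compl_apply_val z)]
  ring

end IsBlockSum

variable (x y : ι → R) (α β : (ι → R) →ₗ[R] R)

noncomputable def pairCompl : ({j // j ∉ ({a, b} : Finset ι)} → R) →ₗ[R] ι → R :=
  (α.smulRight x + β.smulRight y + LinearMap.id) ∘ₗ Function.ExtendByZero.linearMap R Subtype.val

noncomputable def pairSplit : (ι → R) →ₗ[R] ι → R :=
  (LinearMap.proj a).smulRight x + (LinearMap.proj b).smulRight y +
    pairCompl a b x y α β ∘ₗ LinearMap.funLeft R R Subtype.val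

lemma pairSplit_apply (g : ι → R) :
    pairSplit a b x y α β g = g a • x + g b • y + pairCompl a b x y α β (fun j => g j) := rfl

lemma pairCompl_apply (z : {j // j ∉ ({a, b} : Finset ι)} → R) :
    pairCompl a b x y α β z =
      α (Function.ExtendByZero.linearMap R Subtype.val z) • x +
        β (Function.ExtendByZero.linearMap R Subtype.val z) • y +
          Function.ExtendByZero.linearMap R Subtype.val z := rfl

variable {a b x y α β}

lemma pairSplit_block {B : (ι → R) →ₗ[R] (ι → R) →ₗ[R] R} (hB : B.IsAlt) {c : R}
    (hxy : B x y = c) (hα : ∀ h, B h y = -(c * α h)) (hβ : ∀ h, B h x = c * β h) :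
    IsBlockSum a b (B.compl₁₂ (pairSplit a b x y α β) (pairSplit a b x y α β))
      (B.compl₁₂ (pairCompl a b x y α β) (pairCompl a b x y α β)) c := by
  have hyx : B y x = -c := by rw [← hB.neg, hxy]
  have hψx : ∀ z, B (pairCompl a b x y α β z) x = 0 := fun z => by
    simp only [pairCompl_apply, map_add, map_smul, LinearMap.add_apply, LinearMap.smul_apply,
      smul_eq_mul, hB x, hyx, hβ]
    ring
  have hψy : ∀ z, B (pairCompl a b x y α β z) y = 0 := fun z => by
    simp only [pairCompl_apply, map_add, map_smul, LinearMap.add_apply, LinearMap.smul_apply,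
      smul_eq_mul, hB y, hxy, hα]
    ring
  have hxψ : ∀ z, B x (pairCompl a b x y α β z) = 0 := fun z => by rw [← hB.neg, hψx, neg_zero]
  have hyψ : ∀ z, B y (pairCompl a b x y α β z) = 0 := fun z => by rw [← hB.neg, hψy, neg_zero]
  intro g g'
  simp only [pairSplit_apply, map_add, map_smul, LinearMap.add_apply, LinearMap.smul_apply,
    smul_eq_mul, hB x, hB y, hxy, hyx, hψx, hψy, hxψ, hyψ, LinearMap.compl₁₂_apply]
  ring

end General

variable {p k : ℕ} [Fact p.Prime]

lemma natCast_pow_eq_zero_iff {e : ℕ} : (p : ZMod (p ^ k)) ^ e = 0 ↔ k ≤ e := by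
  rw [← Nat.cast_pow, ZMod.natCast_eq_zero_iff,
    Nat.pow_dvd_pow_iff_le_right (Fact.out : p.Prime).one_lt]

variable [NeZero k]

noncomputable def red : ZMod (p ^ k) →+* ZMod p :=
  ZMod.castHom (dvd_pow_self p (NeZero.ne k)) (ZMod p)

lemma red_apply (z : ZMod (p ^ k)) : red z = (z.val : ZMod p) :=
  ZMod.cast_eq_val z

lemma red_surjective : Function.Surjective (red : ZMod (p ^ k) →+* ZMod p) :=
  ZMod.ringHom_surjective _

lemma red_eq_zero_iff {z : ZMod (p ^ k)} : red z = 0 ↔ (p : ZMod (p ^ k)) ∣ z := by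
  constructor
  · intro h
    rw [red_apply, ZMod.natCast_eq_zero_iff] at h
    obtain ⟨t, ht⟩ := h
    exact ⟨t, by rw [← ZMod.natCast_zmod_val z, ht, Nat.cast_mul]⟩
  · rintro ⟨w, rfl⟩
    rw [map_mul, map_natCast, ZMod.natCast_self, zero_mul]

lemma isUnit_iff_red_ne_zero {z : ZMod (p ^ k)} : IsUnit z ↔ red z ≠ 0 := by
  rw [← ZMod.natCast_zmod_val z, ZMod.isUnit_natCast_iff_not_dvd_pow Fact.out
    (Nat.pos_of_ne_zero (NeZero.ne k)), red_apply, ZMod.val_natCast_of_lt (ZMod.val_lt z),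
    Ne, ZMod.natCast_eq_zero_iff]

lemma dvd_of_pow_succ_dvd_pow_mul {e : ℕ} (he : e < k) {z : ZMod (p ^ k)}
    (h : (p : ZMod (p ^ k)) ^ (e + 1) ∣ (p : ZMod (p ^ k)) ^ e * z) : (p : ZMod (p ^ k)) ∣ z := by
  by_contra hz
  have hzu : IsUnit z := isUnit_iff_red_ne_zero.mpr (mt red_eq_zero_iff.mp hz)
  obtain ⟨w, hw⟩ := (Units.dvd_mul_right (u := hzu.unit)).mp h
  have hunit : IsUnit (1 - (p : ZMod (p ^ k)) * w) := by
    rw [isUnit_iff_red_ne_zero (p := p), map_sub, map_mul, map_natCast, ZMod.natCast_self]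
    simp
  have : (p : ZMod (p ^ k)) ^ e * (1 - p * w) = 0 := by rw [mul_sub, mul_one]; linear_combination hw
  exact absurd (natCast_pow_eq_zero_iff.mp (hunit.mul_left_eq_zero.mp this)) (by omega)

section Reduction

variable {ι κ : Type*}

noncomputable def modP (v : ι → ZMod (p ^ k)) : ι → ZMod p := fun j => red (v j)

@[simp]
lemma modP_apply (v : ι → ZMod (p ^ k)) (j : ι) : modP v j = red (v j) := rfl

lemma modP_surjective : Function.Surjective (modP : (ι → ZMod (p ^ k)) → ι → ZMod p) := by
  intro γ
  choose v hv using fun j => red_surjective (k := k) (γ j)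
  exact ⟨v, funext hv⟩

lemma modP_eq_zero_iff {v : ι → ZMod (p ^ k)} : modP v = 0 ↔ ∃ w, v = (p : ZMod (p ^ k)) • w := by
  constructor
  · intro h
    choose w hw using fun j => red_eq_zero_iff (p := p).mp (congrFun h j)
    exact ⟨w, funext hw⟩
  · rintro ⟨w, rfl⟩
    funext j
    exact red_eq_zero_iff.mpr (dvd_mul_right _ _)

lemma modP_sub (v w : ι → ZMod (p ^ k)) : modP (v - w) = modP v - modP w :=
  funext fun j => map_sub red (v j) (w j)

lemma surjective_of_forall_modP_eq [Fintype ι] {M : Type*} [AddCommGroup M]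
    [Module (ZMod (p ^ k)) M] (f : M →ₗ[ZMod (p ^ k)] ι → ZMod (p ^ k))
    (hf : ∀ v : ι → ZMod (p ^ k), ∃ g, modP (f g) = modP v) : Function.Surjective f := by
  rw [← LinearMap.range_eq_top, eq_top_iff]
  refine Submodule.le_of_le_smul_of_le_jacobson_bot (I := Ideal.span {(p : ZMod (p ^ k))})
    Module.Finite.fg_top ?_ ?_
  · rw [Ideal.span_singleton_le_iff_mem, Ideal.mem_jacobson_bot]
    intro y
    rw [isUnit_iff_red_ne_zero]
    simp
  · intro v _
    obtain ⟨g, hg⟩ := hf v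
    obtain ⟨w, hw⟩ := modP_eq_zero_iff.mp (show modP (v - f g) = 0 by rw [modP_sub, hg, sub_self])
    rw [sub_eq_iff_eq_add'] at hw
    rw [hw]
    exact Submodule.add_mem_sup (LinearMap.mem_range_self f g)
      (Submodule.smul_mem_smul (Ideal.mem_span_singleton_self _) trivial)

variable [Fintype κ] [DecidableEq κ]

noncomputable def reduce (f : (κ → ZMod (p ^ k)) →ₗ[ZMod (p ^ k)] ι → ZMod (p ^ k)) :
    (κ → ZMod p) →ₗ[ZMod p] ι → ZMod p :=
  Matrix.toLin' ((LinearMap.toMatrix' f).map red)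

lemma reduce_modP (f : (κ → ZMod (p ^ k)) →ₗ[ZMod (p ^ k)] ι → ZMod (p ^ k))
    (v : κ → ZMod (p ^ k)) : reduce f (modP v) = modP (f v) := by
  funext j
  rw [reduce, Matrix.toLin'_apply, modP_apply, ← LinearMap.toMatrix'_mulVec, RingHom.map_mulVec]
  rfl

lemma bijective_of_modP_eq_zero [Fintype ι] [DecidableEq ι]
    (f : (ι → ZMod (p ^ k)) →ₗ[ZMod (p ^ k)] ι → ZMod (p ^ k))
    (hf : ∀ g, modP (f g) = 0 → modP g = 0) : Function.Bijective f := by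
  have hinj : Function.Injective (reduce f) := by
    rw [injective_iff_map_eq_zero]
    intro γ hγ
    obtain ⟨g, rfl⟩ := modP_surjective (k := k) γ
    exact hf g (by rwa [reduce_modP] at hγ)
  have hsurj : Function.Surjective f := surjective_of_forall_modP_eq f fun v => by
    obtain ⟨γ, hγ⟩ := LinearMap.injective_iff_surjective.mp hinj (modP v)
    obtain ⟨g, rfl⟩ := modP_surjective (k := k) γ
    exact ⟨g, by rw [← reduce_modP, hγ]⟩
  exact ⟨Finite.injective_iff_surjective.mpr hsurj, hsurj⟩

end Reduction

section Radical

variable {ι κ : Type*}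

def radicalModPow (B : (ι → ZMod (p ^ k)) →ₗ[ZMod (p ^ k)] (ι → ZMod (p ^ k)) →ₗ[ZMod (p ^ k)]
    ZMod (p ^ k)) (i : ℕ) : Set (ι → ZMod (p ^ k)) :=
  {h | ∀ x, (p : ZMod (p ^ k)) ^ i ∣ B h x}

noncomputable def radicalRank
    (B : (ι → ZMod (p ^ k)) →ₗ[ZMod (p ^ k)] (ι → ZMod (p ^ k)) →ₗ[ZMod (p ^ k)] ZMod (p ^ k))
    (i : ℕ) : ℕ :=
  Module.finrank (ZMod p) (Submodule.span (ZMod p) (modP '' radicalModPow B i))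

variable [Fintype ι]
  (B : (ι → ZMod (p ^ k)) →ₗ[ZMod (p ^ k)] (ι → ZMod (p ^ k)) →ₗ[ZMod (p ^ k)] ZMod (p ^ k))

lemma radicalRank_le_card (i : ℕ) : radicalRank B i ≤ Fintype.card ι :=
  (Submodule.finrank_le _).trans (Module.finrank_fintype_fun_eq_card (ZMod p)).le

lemma radicalRank_antitone : Antitone (radicalRank B) := fun _ _ hij =>
  Submodule.finrank_mono <| Submodule.span_mono <| Set.image_mono fun _ hh x =>
    (pow_dvd_pow _ hij).trans (hh x)

lemma radicalRank_eq_card {i : ℕ} (h : ∀ a b, (p : ZMod (p ^ k)) ^ i ∣ B a b) :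
    radicalRank B i = Fintype.card ι := by
  have hrad : radicalModPow B i = Set.univ := Set.eq_univ_of_forall fun a b => h a b
  rw [radicalRank, hrad, Set.image_univ, modP_surjective.range_eq, Submodule.span_univ,
    finrank_top, Module.finrank_fintype_fun_eq_card]

lemma radicalRank_compl₁₂_equiv [DecidableEq ι] [Fintype κ] [DecidableEq κ]
    (Φ : (κ → ZMod (p ^ k)) ≃ₗ[ZMod (p ^ k)] ι → ZMod (p ^ k)) (i : ℕ) :
    radicalRank (B.compl₁₂ Φ.toLinearMap Φ.toLinearMap) i = radicalRank B i := by
  have hrad : radicalModPow (B.compl₁₂ Φ.toLinearMap Φ.toLinearMap) i =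
      Φ.symm '' radicalModPow B i := by
    rw [LinearEquiv.image_symm_eq_preimage]
    ext h
    simp only [radicalModPow, Set.mem_preimage, Set.mem_ofPred_eq, LinearMap.compl₁₂_apply,
      LinearEquiv.coe_coe]
    exact (Φ.surjective.forall (p := fun y => (p : ZMod (p ^ k)) ^ i ∣ B (Φ h) y)).symm
  have hinj : Function.Injective (reduce Φ.symm.toLinearMap) := by
    refine Function.LeftInverse.injective (g := reduce Φ.toLinearMap) fun γ => ?_
    obtain ⟨v, rfl⟩ := modP_surjective (k := k) γ
    rw [reduce_modP, reduce_modP]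
    exact congrArg modP (Φ.apply_symm_apply v)
  have hcomm : modP ∘ Φ.symm = reduce Φ.symm.toLinearMap ∘ modP :=
    funext fun v => (reduce_modP _ v).symm
  rw [radicalRank, hrad, ← Set.image_comp, hcomm, Set.image_comp, Submodule.span_image,
    ← (Submodule.equivMapOfInjective _ hinj _).finrank_eq, radicalRank]

end Radical

section Block

variable {ι : Type*}

lemma modP_extendByZero {κ : Type*} (s : κ → ι) (z : κ → ZMod (p ^ k)) :
    modP (Function.ExtendByZero.linearMap _ s z) =
      Function.ExtendByZero.linearMap (ZMod p) s (modP z) := by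
  funext j
  rw [modP_apply, Function.ExtendByZero.linearMap_apply, Function.ExtendByZero.linearMap_apply,
    Function.apply_extend red, show (red ∘ 0 : ι → ZMod p) = 0 from funext fun _ => map_zero red]
  rfl

variable [DecidableEq ι] {a b : ι}

lemma modP_eq_extendByZero {h : ι → ZMod (p ^ k)} (ha : (p : ZMod (p ^ k)) ∣ h a)
    (hb : (p : ZMod (p ^ k)) ∣ h b) :
    modP h = Function.ExtendByZero.linearMap (ZMod p)
      (Subtype.val : {j // j ∉ ({a, b} : Finset ι)} → ι) (modP fun j => h j) := by
  funext j
  by_cases hj : j ∈ ({a, b} : Finset ι)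
  · rw [extendByZero_compl_apply_of_mem _ hj, modP_apply, red_eq_zero_iff]
    rcases Finset.mem_insert.mp hj with rfl | hj
    · exact ha
    · rwa [Finset.mem_singleton.mp hj]
  · exact (extendByZero_compl_apply_val (modP fun j => h j)
      (⟨j, hj⟩ : {j // j ∉ ({a, b} : Finset ι)})).symm

variable {B₀ : (ι → ZMod (p ^ k)) →ₗ[ZMod (p ^ k)] (ι → ZMod (p ^ k)) →ₗ[ZMod (p ^ k)] ZMod (p ^ k)}
  {B' : ({j // j ∉ ({a, b} : Finset ι)} → ZMod (p ^ k)) →ₗ[ZMod (p ^ k)]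
    ({j // j ∉ ({a, b} : Finset ι)} → ZMod (p ^ k)) →ₗ[ZMod (p ^ k)] ZMod (p ^ k)}
  {e i : ℕ} {u : (ZMod (p ^ k))ˣ}

lemma IsBlockSum.dvd_of_mem_radicalModPow (hB₀ : IsBlockSum a b B₀ B' (p ^ e * u)) (hab : a ≠ b)
    (hei : e < i) (hek : e < k) {h : ι → ZMod (p ^ k)} (hh : h ∈ radicalModPow B₀ i) :
    (p : ZMod (p ^ k)) ∣ h a ∧ (p : ZMod (p ^ k)) ∣ h b := by
  have hdvd : ∀ c, (p : ZMod (p ^ k)) ^ i ∣ p ^ e * u * c → (p : ZMod (p ^ k)) ∣ c := fun c hc =>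
    (Units.dvd_mul_left (u := u)).mp <| dvd_of_pow_succ_dvd_pow_mul hek <|
      (pow_dvd_pow _ hei).trans (by rwa [← mul_assoc])
  have hsingle : ∀ c ∈ ({a, b} : Finset ι), (fun j : {j // j ∉ ({a, b} : Finset ι)} =>
      (Pi.single c 1 : ι → ZMod (p ^ k)) j) = 0 :=
    fun c hc => funext fun j => Pi.single_eq_of_ne (fun hjc => j.2 (by rwa [hjc])) _
  constructor
  · refine hdvd _ ?_
    simpa [hB₀ h, hsingle b (by simp), hab] using hh (Pi.single b 1)
  · refine dvd_neg.mp (hdvd _ ?_)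
    simpa [hB₀ h, hsingle a (by simp), hab] using hh (Pi.single a 1)

lemma IsBlockSum.radicalRank_eq (hB₀ : IsBlockSum a b B₀ B' (p ^ e * u)) (hab : a ≠ b)
    (hei : e < i) (hek : e < k) : radicalRank B₀ i = radicalRank B' i := by
  have himage : modP '' radicalModPow B₀ i =
      Function.ExtendByZero.linearMap (ZMod p) Subtype.val '' (modP '' radicalModPow B' i) := by
    ext γ
    constructor
    · rintro ⟨h, hh, rfl⟩
      obtain ⟨ha, hb⟩ := hB₀.dvd_of_mem_radicalModPow hab hei hek hh
      refine ⟨modP fun j => h j, ⟨_, fun z => ?_, rfl⟩, (modP_eq_extendByZero ha hb).symm⟩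
      simpa only [hB₀.apply_extendByZero_right]
        using hh (Function.ExtendByZero.linearMap _ Subtype.val z)
    · rintro ⟨_, ⟨z, hz, rfl⟩, rfl⟩
      refine ⟨Function.ExtendByZero.linearMap _ Subtype.val z, fun g => ?_, modP_extendByZero _ z⟩
      rw [hB₀.apply_extendByZero_left]
      exact hz _
  have hinj := Function.extend_injective
    (Subtype.val_injective (p := fun j => j ∉ ({a, b} : Finset ι))) (0 : ι → ZMod p)
  rw [radicalRank, himage, Submodule.span_image,
    ← (Submodule.equivMapOfInjective _ hinj _).finrank_eq, radicalRank]

end Block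

section Splitting

variable {ι : Type*}
  {B : (ι → ZMod (p ^ k)) →ₗ[ZMod (p ^ k)] (ι → ZMod (p ^ k)) →ₗ[ZMod (p ^ k)] ZMod (p ^ k)}

lemma exists_hyperbolic_pair {i : ℕ} (h : ¬ ∀ v w, (p : ZMod (p ^ k)) ^ i ∣ B v w) :
    ∃ e, e < i ∧ e < k ∧ (∀ v w, (p : ZMod (p ^ k)) ^ e ∣ B v w) ∧
      ∃ x y, ∃ u : (ZMod (p ^ k))ˣ, B x y = p ^ e * u := by
  classical
  push Not at h
  obtain ⟨v, w, hvw⟩ := h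
  obtain ⟨i, rfl⟩ : ∃ i', i = i' + 1 := by
    cases i with
    | zero => exact absurd (one_dvd _) (by rwa [pow_zero] at hvw)
    | succ i => exact ⟨i, rfl⟩
  have hex : ∃ e, ∃ v w, ¬ (p : ZMod (p ^ k)) ^ (e + 1) ∣ B v w := ⟨i, v, w, hvw⟩
  obtain ⟨x, y, hxy⟩ := Nat.find_spec hex
  set e := Nat.find hex
  have hdiv : ∀ v w, (p : ZMod (p ^ k)) ^ e ∣ B v w := by
    intro v w
    rcases Nat.eq_zero_or_pos e with he | he
    · rw [he, pow_zero]
      exact one_dvd _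
    · have := Nat.find_min hex (show e - 1 < e by omega)
      push Not at this
      simpa [Nat.sub_add_cancel he] using this v w
  obtain ⟨c, hc⟩ := hdiv x y
  have hek : e < k := by
    by_contra! hke
    exact hxy ⟨0, by rw [hc, natCast_pow_eq_zero_iff.mpr hke, zero_mul, mul_zero]⟩
  have hcu : IsUnit c := by
    rw [isUnit_iff_red_ne_zero, Ne, red_eq_zero_iff]
    rintro ⟨d, rfl⟩
    exact hxy ⟨d, by rw [hc, pow_succ]; ring⟩
  exact ⟨e, Nat.lt_succ_of_le (Nat.find_min' hex ⟨v, w, hvw⟩), hek, hdiv, x, y, hcu.unit, hc⟩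

lemma linearIndependent_modP_pair (hB : B.IsAlt) {e : ℕ} (hek : e < k)
    (hdiv : ∀ v w, (p : ZMod (p ^ k)) ^ e ∣ B v w) {x y : ι → ZMod (p ^ k)}
    {u : (ZMod (p ^ k))ˣ} (hxy : B x y = p ^ e * u) :
    LinearIndependent (ZMod p) ![modP x, modP y] := by
  rw [LinearIndependent.pair_iff]
  intro s t hst
  obtain ⟨s, rfl⟩ := red_surjective (k := k) s
  obtain ⟨t, rfl⟩ := red_surjective (k := k) t
  obtain ⟨w, hw⟩ := modP_eq_zero_iff.mp (show modP (s • x + t • y) = 0 from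
    funext fun j => by simpa using congrFun hst j)
  have key : ∀ z, (p : ZMod (p ^ k)) ^ (e + 1) ∣ B (s • x + t • y) z := fun z => by
    rw [hw, map_smul, LinearMap.smul_apply, smul_eq_mul, pow_succ']
    exact mul_dvd_mul_left _ (hdiv w z)
  have hyx : B y x = -(p ^ e * u) := by rw [← hB.neg, hxy]
  have hy : B (s • x + t • y) y = p ^ e * (u * s) := by
    simp only [map_add, map_smul, LinearMap.add_apply, LinearMap.smul_apply, smul_eq_mul, hB y, hxy]
    ring
  have hx : B (s • x + t • y) x = p ^ e * (u * -t) := by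
    simp only [map_add, map_smul, LinearMap.add_apply, LinearMap.smul_apply, smul_eq_mul, hB x, hyx]
    ring
  have hs : (p : ZMod (p ^ k)) ∣ s :=
    (Units.dvd_mul_left (u := u)).mp <| dvd_of_pow_succ_dvd_pow_mul hek <| hy ▸ key y
  have ht : (p : ZMod (p ^ k)) ∣ t :=
    dvd_neg.mp <| (Units.dvd_mul_left (u := u)).mp <| dvd_of_pow_succ_dvd_pow_mul hek <| hx ▸ key x
  exact ⟨red_eq_zero_iff.mpr hs, red_eq_zero_iff.mpr ht⟩

lemma bijective_pairSplit [Fintype ι] [DecidableEq ι] {x y : ι → ZMod (p ^ k)} {a b : ι}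
    (hdet : red (x a) * red (y b) - red (x b) * red (y a) ≠ 0)
    (α β : (ι → ZMod (p ^ k)) →ₗ[ZMod (p ^ k)] ZMod (p ^ k)) :
    Function.Bijective (pairSplit a b x y α β) := by
  refine bijective_of_modP_eq_zero _ fun g hg => ?_
  set z := Function.ExtendByZero.linearMap (ZMod (p ^ k))
    (Subtype.val : {j // j ∉ ({a, b} : Finset ι)} → ι) (fun j => g j)
  have hcoord : ∀ j, red (g a + α z) * red (x j) + red (g b + β z) * red (y j) + red (z j) = 0 :=
    fun j => by
      refine Eq.trans ?_ (congrFun hg j)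
      rw [modP_apply, pairSplit_apply, pairCompl_apply]
      simp only [Pi.add_apply, Pi.smul_apply, smul_eq_mul, map_add, map_mul]
      ring
  have hza : z a = 0 := extendByZero_compl_apply_of_mem _ (by simp)
  have hzb : z b = 0 := extendByZero_compl_apply_of_mem _ (by simp)
  obtain ⟨hS, hT⟩ := eq_zero_of_mul_add_mul_eq_zero hdet
    (by simpa only [hza, map_zero, add_zero] using hcoord a)
    (by simpa only [hzb, map_zero, add_zero] using hcoord b)
  have hz : modP z = 0 := funext fun j => by
    simpa only [hS, hT, zero_mul, zero_add, modP_apply, Pi.zero_apply] using hcoord j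
  obtain ⟨w, hw⟩ := modP_eq_zero_iff.mp hz
  have hred : ∀ γ : (ι → ZMod (p ^ k)) →ₗ[ZMod (p ^ k)] ZMod (p ^ k), red (γ z) = 0 := fun γ => by
    rw [hw, map_smul, smul_eq_mul, red_eq_zero_iff]
    exact dvd_mul_right _ _
  funext j
  rw [modP_apply, Pi.zero_apply]
  by_cases hj : j ∈ ({a, b} : Finset ι)
  · rcases Finset.mem_insert.mp hj with rfl | hj
    · rwa [map_add, hred α, add_zero] at hS
    · rw [Finset.mem_singleton.mp hj]
      rwa [map_add, hred β, add_zero] at hT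
  · rw [← extendByZero_compl_apply_val (fun j => g j) (⟨j, hj⟩ : {j // j ∉ ({a, b} : Finset ι)})]
    exact congrFun hz j

lemma exists_radicalRank_eq_of_hyperbolic [Fintype ι] [DecidableEq ι] (hB : B.IsAlt) {e i : ℕ}
    (hei : e < i) (hek : e < k) (hdiv : ∀ v w, (p : ZMod (p ^ k)) ^ e ∣ B v w)
    {x y : ι → ZMod (p ^ k)} {u : (ZMod (p ^ k))ˣ} (hxy : B x y = p ^ e * u) :
    ∃ a b : ι, a ≠ b ∧ ∃ B' : ({j // j ∉ ({a, b} : Finset ι)} → ZMod (p ^ k)) →ₗ[ZMod (p ^ k)]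
      ({j // j ∉ ({a, b} : Finset ι)} → ZMod (p ^ k)) →ₗ[ZMod (p ^ k)] ZMod (p ^ k),
      B'.IsAlt ∧ radicalRank B i = radicalRank B' i := by
  obtain ⟨a, b, hdet⟩ := exists_mul_sub_mul_ne_zero (linearIndependent_modP_pair hB hek hdiv hxy)
  have hab : a ≠ b := by
    rintro rfl
    exact hdet (sub_self _)
  have hdvd : ∀ c, (p : ZMod (p ^ k)) ^ e ∣ c → (p : ZMod (p ^ k)) ^ e * u ∣ c := fun c hc =>
    Units.mul_right_dvd.mpr hc
  -- `α`, `β` divide `B · y`, `B · x` by `∓p^e u`: this puts the range of `pairCompl` in the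
  -- `B`-orthogonal of `x` and `y`
  obtain ⟨α, hα⟩ := exists_linearMap_eq_mul (d := -((p : ZMod (p ^ k)) ^ e * u)) (B.flip y)
    fun h => neg_dvd.mpr (hdvd _ (hdiv h y))
  obtain ⟨β, hβ⟩ := exists_linearMap_eq_mul (B.flip x) fun h => hdvd _ (hdiv h x)
  let Φ := LinearEquiv.ofBijective _ (bijective_pairSplit hdet α β)
  refine ⟨a, b, hab, B.compl₁₂ (pairCompl a b x y α β) (pairCompl a b x y α β), fun z => hB _, ?_⟩
  rw [← radicalRank_compl₁₂_equiv B Φ]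
  exact (pairSplit_block hB hxy (fun h => by rw [← neg_mul]; exact hα h) hβ).radicalRank_eq
    hab hei hek

end Splitting

theorem radicalRank_mod_two {ι : Type*} [Fintype ι] [DecidableEq ι]
    {B : (ι → ZMod (p ^ k)) →ₗ[ZMod (p ^ k)] (ι → ZMod (p ^ k)) →ₗ[ZMod (p ^ k)] ZMod (p ^ k)}
    (hB : B.IsAlt) (i : ℕ) : radicalRank B i % 2 = Fintype.card ι % 2 := by
  induction hn : Fintype.card ι using Nat.strong_induction_on generalizing ι with
  | _ n ih =>
  by_cases hall : ∀ v w, (p : ZMod (p ^ k)) ^ i ∣ B v w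
  · rw [radicalRank_eq_card B hall, hn]
  obtain ⟨e, hei, hek, hdiv, x, y, u, hxy⟩ := exists_hyperbolic_pair hall
  obtain ⟨a, b, hab, B', hB', hrank⟩ := exists_radicalRank_eq_of_hyperbolic hB hei hek hdiv hxy
  have hcard : Fintype.card {j // j ∉ ({a, b} : Finset ι)} + 2 = n := by
    rw [Fintype.card_subtype_compl, Fintype.card_coe, Finset.card_pair hab, ← hn]
    have := Finset.card_le_univ ({a, b} : Finset ι)
    rw [Finset.card_pair hab] at this
    omega
  rw [hrank, ih _ (by omega) hB' rfl]
  omega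

lemma qinv_eq_radicalRank (m : ℕ)
    (B : (Fin m → ZMod (p ^ k)) →ₗ[ZMod (p ^ k)] (Fin m → ZMod (p ^ k)) →ₗ[ZMod (p ^ k)]
      ZMod (p ^ k)) (i : ℕ) : qinv p k m B i = radicalRank B i := by
  have hμ : (fun h : Fin m → ZMod (p ^ k) => fun j => (((h j).val : ℕ) : ZMod p)) = modP :=
    funext fun h => funext fun j => (red_apply (h j)).symm
  rw [qinv, hμ]
  rfl

end AlternatingModPrimePow

theorem stmt5_general (p k m : ℕ) (hp : p.Prime)
    (B : (Fin m → ZMod (p^k)) →ₗ[ZMod (p^k)] (Fin m → ZMod (p^k)) →ₗ[ZMod (p^k)] ZMod (p^k))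
    (hB : ∀ a, B a a = 0) :
    (∀ i, 1 ≤ i → i ≤ k → qinv p k m B i ≤ m) ∧
    (∀ i j, 1 ≤ i → i ≤ j → j ≤ k → qinv p k m B j ≤ qinv p k m B i) ∧
    (∀ i, 1 ≤ i → i ≤ k → qinv p k m B i % 2 = m % 2) := by
  have := Fact.mk hp
  refine ⟨fun i hi hik => ?_, fun i j hi hij hjk => ?_, fun i hi hik => ?_⟩ <;>
    have : NeZero k := ⟨by omega⟩ <;>
    simp only [AlternatingModPrimePow.qinv_eq_radicalRank]
  · simpa using AlternatingModPrimePow.radicalRank_le_card B i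
  · exact AlternatingModPrimePow.radicalRank_antitone B hij
  · simpa using AlternatingModPrimePow.radicalRank_mod_two hB i

/-- The invariants `q_i` of an alternating bilinear form on `(ℤ/p^kℤ)^m` satisfy
`0 ≤ q_k ≤ ⋯ ≤ q_1 ≤ m` and `q_i ≡ m (mod 2)`. -/
theorem stmt5 (p k m : ℕ) (hp : p.Prime) (hk : 1 ≤ k)
    (B : (Fin m → ZMod (p^k)) →ₗ[ZMod (p^k)] (Fin m → ZMod (p^k)) →ₗ[ZMod (p^k)] ZMod (p^k))
    (hB : ∀ a, B a a = 0) :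
    (∀ i, 1 ≤ i → i ≤ k → qinv p k m B i ≤ m) ∧
    (∀ i j, 1 ≤ i → i ≤ j → j ≤ k → qinv p k m B j ≤ qinv p k m B i) ∧
    (∀ i, 1 ≤ i → i ≤ k → qinv p k m B i % 2 = m % 2) :=
  stmt5_general p k m hp B hB
end

section
/- Let p be prime, k, m ≥ 1, and let q = (q_1, ..., q_k) be integers with 0 ≤ q_k ≤ q_{k-1} ≤ ... ≤ q_1 ≤ m and q_i ≡ m (mod 2) for all i. Then there exists an alternating bilinear form (.,.) on G = (Z/p^k Z)^m whose invariants are exactly q, i.e., for each i the F_p-dimension of μ({h ∈ G : (h, x) ≡ 0 mod p^i for all x ∈ G}) equals q_i. -/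
open scoped Matrix

/-- Extension of a vector on `Fin m` to `ℕ` by zero. -/
def pext {R : Type} [CommRing R] (m : ℕ) (h : Fin m → R) (n : ℕ) : R :=
  if hn : n < m then h ⟨n, hn⟩ else 0

lemma pext_add {R : Type} [CommRing R] (m : ℕ) (h h' : Fin m → R) (n : ℕ) :
    pext m (h + h') n = pext m h n + pext m h' n := by
  unfold pext; split <;> simp

lemma pext_smul {R : Type} [CommRing R] (m : ℕ) (c : R) (h : Fin m → R) (n : ℕ) :
    pext m (c • h) n = c * pext m h n := by
  unfold pext; split <;> simp [smul_eq_mul]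

lemma pext_single {R : Type} [CommRing R] (m : ℕ) (ℓ : Fin m) (n : ℕ) :
    pext m (Pi.single ℓ (1:R)) n = if n = (ℓ:ℕ) then 1 else 0 := by
  unfold pext
  split
  · simp [Pi.single_apply, Fin.ext_iff]
  · rw [if_neg]; omega

lemma pext_eq {R : Type} [CommRing R] (m : ℕ) (h : Fin m → R) (n : ℕ) (hn : n < m) :
    pext m h n = h ⟨n, hn⟩ := dif_pos hn

lemma pext_apply {R : Type} [CommRing R] (m : ℕ) (h : Fin m → R) (ℓ : Fin m) :
    pext m h (ℓ:ℕ) = h ℓ := by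
  unfold pext; rw [dif_pos ℓ.isLt]

/-- Orthogonal sum of `N` scaled hyperbolic planes on coordinates `(2a, 2a+1)`. -/
def Bform (R : Type) [CommRing R] (m N : ℕ) (w : ℕ → R) :
    (Fin m → R) →ₗ[R] (Fin m → R) →ₗ[R] R :=
  LinearMap.mk₂ R (fun h x => ∑ a ∈ Finset.range N,
      w a * (pext m h (2*a) * pext m x (2*a+1) - pext m h (2*a+1) * pext m x (2*a)))
    (by
      intro h h' x
      rw [← Finset.sum_add_distrib]
      exact Finset.sum_congr rfl fun a _ => by rw [pext_add, pext_add]; ring)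
    (by
      intro c h x
      rw [smul_eq_mul, Finset.mul_sum]
      exact Finset.sum_congr rfl fun a _ => by rw [pext_smul, pext_smul]; ring)
    (by
      intro h x x'
      rw [← Finset.sum_add_distrib]
      exact Finset.sum_congr rfl fun a _ => by rw [pext_add, pext_add]; ring)
    (by
      intro c h x
      rw [smul_eq_mul, Finset.mul_sum]
      exact Finset.sum_congr rfl fun a _ => by rw [pext_smul, pext_smul]; ring)

lemma Bform_apply (R : Type) [CommRing R] (m N : ℕ) (w : ℕ → R) (h x : Fin m → R) :
    Bform R m N w h x = ∑ a ∈ Finset.range N,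
      w a * (pext m h (2*a) * pext m x (2*a+1) - pext m h (2*a+1) * pext m x (2*a)) := rfl

/-- Key divisibility: if `p^e * h ∈ p^i · ZMod (p^k)` with `e < i ≤ k`, then `p ∣ h.val`. -/
lemma dvd_val_of_eq (p k e i : ℕ) (hp : p.Prime) (hei : e < i) (hik : i ≤ k)
    (h c : ZMod (p^k)) (H : (p:ZMod (p^k))^e * h = (p:ZMod (p^k))^i * c) :
    p ∣ h.val := by
  haveI : NeZero (p^k) := ⟨pow_ne_zero _ hp.pos.ne'⟩
  haveI : NeZero (p^(e+1)) := ⟨pow_ne_zero _ hp.pos.ne'⟩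
  have hdvd : p^(e+1) ∣ p^k := pow_dvd_pow p (by omega)
  let χ := ZMod.castHom hdvd (ZMod (p^(e+1)))
  have H2 := congrArg χ H
  simp only [map_mul, map_pow, map_natCast, ZMod.castHom_apply] at H2
  have hpi : (p:ZMod (p^(e+1)))^i = 0 := by
    rw [← Nat.cast_pow, ZMod.natCast_eq_zero_iff]
    exact pow_dvd_pow p (by omega)
  rw [hpi, zero_mul] at H2
  have hv : ((p^e * h.val : ℕ) : ZMod (p^(e+1))) = 0 := by
    push_cast
    rw [ZMod.natCast_val]
    exact H2
  rw [ZMod.natCast_eq_zero_iff, pow_succ] at hv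
  exact (Nat.mul_dvd_mul_iff_left (pow_pos hp.pos e)).mp hv

/-- For any tuple `q = (q_1,…,q_k)` with `0 ≤ q_k ≤ ⋯ ≤ q_1 ≤ m` and `q_i ≡ m (mod 2)`,
there is an alternating bilinear form on `(ℤ/p^kℤ)^m` with invariants exactly `q`. -/
theorem stmt6 (p k m : ℕ) (hp : p.Prime) (hk : 1 ≤ k) (q : ℕ → ℕ)
    (hq1 : ∀ i, 1 ≤ i → i ≤ k → q i ≤ m)
    (hqmono : ∀ i j, 1 ≤ i → i ≤ j → j ≤ k → q j ≤ q i)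
    (hqpar : ∀ i, 1 ≤ i → i ≤ k → q i % 2 = m % 2) :
    ∃ B : (Fin m → ZMod (p^k)) →ₗ[ZMod (p^k)]
        (Fin m → ZMod (p^k)) →ₗ[ZMod (p^k)] ZMod (p^k),
      (∀ a, B a a = 0) ∧ (∀ i, 1 ≤ i → i ≤ k → qinv p k m B i = q i) := by
  classical
  haveI : Fact p.Prime := ⟨hp⟩
  haveI : NeZero (p^k) := ⟨pow_ne_zero _ hp.pos.ne'⟩
  set R := ZMod (p^k) with hRdef
  set t : ℕ → ℕ := fun i => (m - q i)/2 with ht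
  set e : ℕ → ℕ := fun a => ((Finset.Icc 1 k).filter (fun i => t i ≤ a)).card with hedef
  have ht2 : ∀ i, 1 ≤ i → i ≤ k → 2 * t i = m - q i := by
    intro i h1 h2
    have := hqpar i h1 h2
    have := hq1 i h1 h2
    simp only [ht]
    omega
  have htmono : ∀ i j, 1 ≤ i → i ≤ j → j ≤ k → t i ≤ t j := by
    intro i j h1 h2 h3
    have := hqmono i j h1 h2 h3
    simp only [ht]
    omega
  have he : ∀ a i, 1 ≤ i → i ≤ k → (i ≤ e a ↔ t i ≤ a) := by
    intro a i h1 h2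
    constructor
    · intro hia
      by_contra hcon
      push_neg at hcon
      have hsub : (Finset.Icc 1 k).filter (fun j => t j ≤ a) ⊆ Finset.Icc 1 (i-1) := by
        intro j hj
        simp only [Finset.mem_filter, Finset.mem_Icc] at hj ⊢
        obtain ⟨⟨hj1, hjk⟩, hja⟩ := hj
        refine ⟨hj1, ?_⟩
        by_contra hji
        push_neg at hji
        have : t i ≤ t j := htmono i j h1 (by omega) hjk
        omega
      have hcard := Finset.card_le_card hsub
      rw [Nat.card_Icc] at hcard
      simp only [hedef] at hia
      omega
    · intro hta
      have hsub : Finset.Icc 1 i ⊆ (Finset.Icc 1 k).filter (fun j => t j ≤ a) := by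
        intro j hj
        simp only [Finset.mem_filter, Finset.mem_Icc] at hj ⊢
        obtain ⟨hj1, hji⟩ := hj
        exact ⟨⟨hj1, by omega⟩, le_trans (htmono j i hj1 hji h2) hta⟩
      have hcard := Finset.card_le_card hsub
      rw [Nat.card_Icc] at hcard
      simp only [hedef]
      omega
  have h2N : 2 * t k = m - q k := ht2 k hk le_rfl
  have hqkm : q k ≤ m := hq1 k hk le_rfl
  set B := Bform R m (t k) (fun a => (p:R)^(e a)) with hB
  refine ⟨B, ?_, ?_⟩
  · intro a
    rw [hB, Bform_apply]
    exact Finset.sum_eq_zero fun _ _ => by ring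
  intro i h1i hik
  have hti : 2 * t i = m - q i := ht2 i h1i hik
  have htik : t i ≤ t k := htmono i k h1i hik le_rfl
  have hqim : q i ≤ m := hq1 i h1i hik
  have hBsingle1 : ∀ (h : Fin m → R) (a : ℕ) (ha : a < t k),
      B h (Pi.single ⟨2*a+1, by omega⟩ (1:R)) = (p:R)^(e a) * pext m h (2*a) := by
    intro h a ha
    rw [hB, Bform_apply, Finset.sum_eq_single a]
    · rw [pext_single, pext_single,
        if_pos (show 2*a+1 = 2*a+1 from rfl), if_neg (show ¬(2*a = 2*a+1) by omega)]
      ring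
    · intro b hb hba
      rw [pext_single, pext_single,
        if_neg (show ¬(2*b+1 = 2*a+1) by omega), if_neg (show ¬(2*b = 2*a+1) by omega)]
      ring
    · intro h'
      exact absurd (Finset.mem_range.mpr ha) h'
  have hBsingle0 : ∀ (h : Fin m → R) (a : ℕ) (ha : a < t k),
      B h (Pi.single ⟨2*a, by omega⟩ (1:R)) = -((p:R)^(e a) * pext m h (2*a+1)) := by
    intro h a ha
    rw [hB, Bform_apply, Finset.sum_eq_single a]
    · rw [pext_single, pext_single,
        if_neg (show ¬(2*a+1 = 2*a) by omega), if_pos (show 2*a = 2*a from rfl)]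
      ring
    · intro b hb hba
      rw [pext_single, pext_single,
        if_neg (show ¬(2*b+1 = 2*a) by omega), if_neg (show ¬(2*b = 2*a) by omega)]
      ring
    · intro h'
      exact absurd (Finset.mem_range.mpr ha) h'
  have hset : (fun h : Fin m → R => fun j => (((h j).val : ℕ) : ZMod p)) ''
      {h | ∀ x, ∃ c, B h x = (p:R)^i * c}
      = {v : Fin m → ZMod p | ∀ ℓ : Fin m, (ℓ:ℕ) < 2 * t i → v ℓ = 0} := by
    ext v
    constructor
    · rintro ⟨h, hmem, rfl⟩
      intro ℓ hℓ
      set a := (ℓ:ℕ)/2 with hadef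
      have hℓlt := ℓ.isLt
      have ha : a < t i := by omega
      have haN : a < t k := lt_of_lt_of_le ha htik
      have hea : e a < i := by
        by_contra hcon
        push_neg at hcon
        have := (he a i h1i hik).mp hcon
        omega
      rcases Nat.mod_two_eq_zero_or_one (ℓ:ℕ) with hpar | hpar
      · have hval : (ℓ:ℕ) = 2*a := by omega
        obtain ⟨c, hc⟩ := hmem (Pi.single ⟨2*a+1, by omega⟩ 1)
        have hc2 := (hBsingle1 h a haN).symm.trans hc
        rw [show 2*a = (ℓ:ℕ) from hval.symm, pext_apply] at hc2
        exact (ZMod.natCast_eq_zero_iff _ p).mpr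
          (dvd_val_of_eq p k (e a) i hp hea hik _ c hc2)
      · have hval : (ℓ:ℕ) = 2*a+1 := by omega
        obtain ⟨c, hc⟩ := hmem (Pi.single ⟨2*a, by omega⟩ 1)
        have hc2 := (hBsingle0 h a haN).symm.trans hc
        have hc3 : (p:R)^(e a) * pext m h (2*a+1) = (p:R)^i * (-c) := by
          rw [mul_neg, ← hc2]; ring
        rw [show 2*a+1 = (ℓ:ℕ) from hval.symm, pext_apply] at hc3
        exact (ZMod.natCast_eq_zero_iff _ p).mpr
          (dvd_val_of_eq p k (e a) i hp hea hik _ (-c) hc3)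
    · intro hv
      refine ⟨fun ℓ => if (ℓ:ℕ) < 2 * t i then 0 else (((v ℓ).val : ℕ) : R), ?_, ?_⟩
      · intro x
        set hh : Fin m → R := fun ℓ => if (ℓ:ℕ) < 2 * t i then 0 else (((v ℓ).val : ℕ) : R)
          with hhdef
        have hz : ∀ n, n < m → n < 2 * t i → pext m hh n = 0 := by
          intro n hn1 hn2
          rw [pext_eq m hh n hn1, hhdef]
          exact if_pos hn2
        refine ⟨∑ a ∈ Finset.range (t k), (p:R)^(e a - i) *
          (pext m hh (2*a) * pext m x (2*a+1) - pext m hh (2*a+1) * pext m x (2*a)), ?_⟩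
        rw [hB, Bform_apply, Finset.mul_sum]
        refine Finset.sum_congr rfl fun a ha => ?_
        rw [Finset.mem_range] at ha
        by_cases hai : a < t i
        · rw [hz (2*a) (by omega) (by omega), hz (2*a+1) (by omega) (by omega)]
          ring
        · have hie : i ≤ e a := (he a i h1i hik).mpr (by omega)
          rw [show (p:R)^(e a) = (p:R)^i * (p:R)^(e a - i) by rw [← pow_add]; congr 1; omega]
          ring
      · funext j
        simp only []
        by_cases hc : (j:ℕ) < 2 * t i
        · rw [if_pos hc, ZMod.val_zero, Nat.cast_zero, hv j hc]
        · rw [if_neg hc]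
          have hlt : (v j).val < p^k :=
            lt_of_lt_of_le (ZMod.val_lt _) (Nat.le_self_pow (by omega) p)
          rw [ZMod.val_natCast_of_lt hlt, ZMod.natCast_val, ZMod.cast_id]
  unfold qinv
  rw [hset]
  have hqm : 2 * t i + q i = m := by omega
  set fam : {ℓ : Fin m // 2 * t i ≤ (ℓ:ℕ)} → (Fin m → ZMod p) :=
    fun ℓ => Pi.single ℓ.1 1 with hfam
  have hspan : Submodule.span (ZMod p)
      {v : Fin m → ZMod p | ∀ ℓ : Fin m, (ℓ:ℕ) < 2 * t i → v ℓ = 0}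
      = Submodule.span (ZMod p) (Set.range fam) := by
    apply le_antisymm
    · rw [Submodule.span_le]
      intro v hv
      have hdecomp : v = ∑ ℓ : Fin m, v ℓ • (Pi.single ℓ (1:ZMod p) : Fin m → ZMod p) := by
        funext j
        rw [Finset.sum_apply]
        simp [Pi.single_apply]
      rw [hdecomp]
      apply Submodule.sum_mem
      intro ℓ _
      by_cases hℓ : 2 * t i ≤ (ℓ:ℕ)
      · exact Submodule.smul_mem _ _ (Submodule.subset_span ⟨⟨ℓ, hℓ⟩, rfl⟩)
      · rw [hv ℓ (by omega), zero_smul]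
        exact Submodule.zero_mem _
    · rw [Submodule.span_le]
      rintro _ ⟨ℓ, rfl⟩
      apply Submodule.subset_span
      intro j hj
      exact Pi.single_eq_of_ne (Fin.ne_of_val_ne (by have := ℓ.2; omega)) 1
  rw [hspan]
  have hlin : LinearIndependent (ZMod p) fam := by
    have h2 := (Pi.basisFun (ZMod p) (Fin m)).linearIndependent.comp
      (Subtype.val : {ℓ : Fin m // 2 * t i ≤ (ℓ:ℕ)} → Fin m) Subtype.val_injective
    have : fam = (Pi.basisFun (ZMod p) (Fin m)) ∘ Subtype.val := by
      funext ℓ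
      simp [hfam, Pi.basisFun_apply]
    rw [this]
    exact h2
  rw [finrank_span_eq_card hlin]
  have hequiv : {ℓ : Fin m // 2 * t i ≤ (ℓ:ℕ)} ≃ Fin (q i) :=
    { toFun := fun ℓ => ⟨(ℓ:Fin m).val - 2*t i, by have := ℓ.1.isLt; have := ℓ.2; omega⟩
      invFun := fun j => ⟨⟨(j:ℕ) + 2*t i, by have := j.isLt; omega⟩, Nat.le_add_left _ _⟩
      left_inv := fun ℓ => by
        apply Subtype.ext
        apply Fin.ext
        have := ℓ.2
        simp
        omega
      right_inv := fun j => by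
        apply Fin.ext
        simp }
  rw [Fintype.card_congr hequiv, Fintype.card_fin]
end

section
/- Every alternating bilinear form on G = (Z/p^k Z)^m can be brought by a change of basis to a block-diagonal form that is an orthogonal direct sum of 2×2 blocks [[0, p^{a_j}], [-p^{a_j}, 0]] with 0 ≤ a_j ≤ k (where p^k = 0 gives zero blocks), together with at most one zero 1×1 block when m is odd. -/
/-!
Divisibility in `ℤ/p^k` is a total preorder: every element is `p^a` times a unit. Among the
pairings `B(bᵢ, bⱼ)` of a basis pick one, `d = B(e, f)`, that divides all the others. Then every
other basis vector `w` can be corrected by multiples of `e` and `f` to become orthogonal to both,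
which splits off the block `[[0, d], [-d, 0]]`; the corrections form a unipotent change of basis.
Inducting on the span of the corrected vectors gives blocks with arbitrary entries `dᵣ`, and writing
`dᵣ = p^aᵣ uᵣ` and dividing the second vector of each pair by `uᵣ` gives the blocks
`[[0, p^aᵣ], [-p^aᵣ, 0]]`.
-/

open Module Submodule Set

theorem ZMod.exists_eq_pow_mul_unit {p k : ℕ} (hp : p.Prime) (x : ZMod (p ^ k)) :
    ∃ a ≤ k, ∃ u : (ZMod (p ^ k))ˣ, x = (p : ZMod (p ^ k)) ^ a * u := by
  have : NeZero (p ^ k) := ⟨pow_ne_zero _ hp.ne_zero⟩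
  rcases eq_or_ne x 0 with rfl | hx
  · exact ⟨k, le_rfl, 1, by rw [← Nat.cast_pow, ZMod.natCast_self, zero_mul]⟩
  obtain ⟨a, r, hpr, hxr⟩ :=
    Nat.exists_eq_pow_mul_and_not_dvd ((ZMod.val_ne_zero x).mpr hx) p hp.ne_one
  have hak : a ≤ k := by
    by_contra! h
    have := x.val_lt
    have := Nat.pow_lt_pow_right hp.one_lt h
    have := Nat.le_of_dvd (ZMod.val_pos.mpr hx) (hxr ▸ dvd_mul_right (p ^ a) r)
    omega
  have hr : IsUnit (r : ZMod (p ^ k)) :=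
    (ZMod.isUnit_iff_coprime r _).mpr ((hp.coprime_iff_not_dvd.mpr hpr).symm.pow_right k)
  refine ⟨a, hak, hr.unit, ?_⟩
  rw [IsUnit.unit_spec, ← ZMod.natCast_zmod_val x, hxr, Nat.cast_mul, Nat.cast_pow]

theorem ZMod.preValuationRing_prime_pow {p k : ℕ} (hp : p.Prime) :
    PreValuationRing (ZMod (p ^ k)) := by
  refine PreValuationRing.iff_dvd_total.mpr ⟨fun x y => ?_⟩
  obtain ⟨a, -, u, rfl⟩ := ZMod.exists_eq_pow_mul_unit hp x
  obtain ⟨b, -, v, rfl⟩ := ZMod.exists_eq_pow_mul_unit hp y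
  rcases le_total a b with h | h
  · exact .inl (mul_dvd_mul (pow_dvd_pow _ h) u.isUnit.dvd)
  · exact .inr (mul_dvd_mul (pow_dvd_pow _ h) v.isUnit.dvd)

theorem PreValuationRing.exists_dvd_forall {R ι : Type*} [CommRing R] [PreValuationRing R]
    (s : Finset ι) (hs : s.Nonempty) (f : ι → R) : ∃ i ∈ s, ∀ j ∈ s, f i ∣ f j := by
  classical
  obtain ⟨i, hi, hmax⟩ := s.exists_max_image (fun i => Ideal.span {f i}) hs
  exact ⟨i, hi, fun j hj => Ideal.span_singleton_le_span_singleton.mp (hmax j hj)⟩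

theorem Fin.exists_perm_zero_one {n : ℕ} {s t : Fin (n + 2)} (hst : s ≠ t) :
    ∃ σ : Equiv.Perm (Fin (n + 2)), σ 0 = s ∧ σ 1 = t := by
  set u := Equiv.swap 0 s t
  have hu : u ≠ 0 := fun h =>
    hst ((Equiv.swap_apply_eq_iff.mp h).trans (Equiv.swap_apply_left _ _)).symm
  refine ⟨(Equiv.swap 1 u).trans (Equiv.swap 0 s), ?_, ?_⟩
  · simp [Equiv.swap_apply_of_ne_of_ne Fin.zero_ne_one hu.symm]
  · simp [u]

section NormalForm

variable {R M : Type*} [CommRing R] [AddCommGroup M] [Module R M]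

def IsAltNormalForm {m : ℕ} (B : M →ₗ[R] M →ₗ[R] R) (v : Fin m → M) (d : ℕ → R) : Prop :=
  ∀ i j : Fin m, (i : ℕ) < j →
    B (v i) (v j) = if (j : ℕ) = i + 1 ∧ (i : ℕ) % 2 = 0 then d (i / 2) else 0

theorem IsAltNormalForm.cons {n : ℕ} {B : M →ₗ[R] M →ₗ[R] R} {e₀ e₁ : M} {w : Fin n → M}
    {d : ℕ → R} (hw : IsAltNormalForm B w d) (h₀ : ∀ j, B e₀ (w j) = 0)
    (h₁ : ∀ j, B e₁ (w j) = 0) :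
    IsAltNormalForm B (Fin.cons e₀ (Fin.cons e₁ w : Fin (n + 1) → M))
      (fun | 0 => B e₀ e₁ | r + 1 => d r) := by
  intro i j hij
  induction i using Fin.cases with
  | zero =>
    induction j using Fin.cases with
    | zero => simp at hij
    | succ j =>
      induction j using Fin.cases with
      | zero => simp
      | succ j => simp [h₀]
  | succ i =>
    induction j using Fin.cases with
    | zero => simp at hij
    | succ j =>
      induction i using Fin.cases with
      | zero =>
        induction j using Fin.cases with
        | zero => simp at hij
        | succ j => simp [h₁]
      | succ i =>
        induction j using Fin.cases with
        | zero => simp at hij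
        | succ j =>
          simp only [Fin.val_succ] at hij ⊢
          have hdiv : ((i : ℕ) + 1 + 1) / 2 = (i : ℕ) / 2 + 1 := by omega
          simp only [Fin.cons_succ, hw i j (by omega), hdiv]
          exact if_congr (by omega) rfl rfl

theorem IsAltNormalForm.unitsSMul {m : ℕ} {B : M →ₗ[R] M →ₗ[R] R} {v : Fin m → M}
    {d e : ℕ → R} (u : ℕ → Rˣ) (hv : IsAltNormalForm B v d) (hd : ∀ r, d r = e r * u r) :
    IsAltNormalForm B (fun i => (if (i : ℕ) % 2 = 1 then (u (i / 2))⁻¹ else 1 : Rˣ) • v i) e := by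
  intro i j hij
  simp only [Units.smul_def, map_smul, LinearMap.smul_apply, hv i j hij, smul_eq_mul]
  by_cases h : (j : ℕ) = i + 1 ∧ (i : ℕ) % 2 = 0
  · have hi : ¬(i : ℕ) % 2 = 1 := by omega
    have hj : (j : ℕ) % 2 = 1 ∧ (j : ℕ) / 2 = i / 2 := by omega
    rw [if_neg hi, if_pos hj.1, hj.2, if_pos h, if_pos h, hd]
    simp [mul_left_comm]
  · simp [h]

theorem Module.Basis.exists_eq_sumElim {ι κ κ' : Type*} (b : Basis (ι ⊕ κ) R M)
    (c : Basis κ' R (span R (range (b ∘ Sum.inr)))) :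
    ∃ b' : Basis (ι ⊕ κ') R M, ⇑b' = Sum.elim (b ∘ Sum.inl) (Subtype.val ∘ c) := by
  have hcompl : IsCompl (span R (range (b ∘ Sum.inl))) (span R (range (b ∘ Sum.inr))) := by
    simpa only [range_comp] using
      b.linearIndependent.isCompl_span_image b.span_eq isCompl_range_inl_range_inr
  refine ⟨((Basis.span (b.linearIndependent.comp _ Sum.inl_injective)).prod c).map
    (prodEquivOfIsCompl _ _ hcompl), funext fun x => ?_⟩
  cases x <;> simp [Basis.span_apply]

theorem Module.Basis.exists_eq_cons_cons {n : ℕ} (b : Basis (Fin (n + 2)) R M)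
    (c : Basis (Fin n) R (span R (range fun j : Fin n => b j.succ.succ))) :
    ∃ b' : Basis (Fin (n + 2)) R M,
      ⇑b' = Fin.cons (b 0) (Fin.cons (b 1) fun j => (c j : M) : Fin (n + 1) → M) := by
  let e : Fin 2 ⊕ Fin n ≃ Fin (n + 2) := finSumFinEquiv.trans (finCongr (Nat.add_comm 2 n))
  have he₀ : e (.inl 0) = 0 := rfl
  have he₁ : e (.inl 1) = 1 := rfl
  have he : ∀ j : Fin n, e (.inr j) = j.succ.succ := fun j => by ext; simp [e]
  have htail : ⇑(b.reindex e.symm) ∘ Sum.inr = fun j => b j.succ.succ := by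
    funext j
    simp [he]
  obtain ⟨b', hb'⟩ :=
    (b.reindex e.symm).exists_eq_sumElim (c.map (LinearEquiv.ofEq _ _ (by rw [htail])))
  refine ⟨b'.reindex e, ?_⟩
  rw [Basis.coe_reindex, Equiv.comp_symm_eq, hb']
  funext x
  rcases x with i | j
  · fin_cases i <;> simp [he₀, he₁]
  · simp [he]

theorem Module.Basis.exists_orthogonal_tail_of_dvd {n : ℕ} {B : M →ₗ[R] M →ₗ[R] R}
    (hB : B.IsAlt) (b : Basis (Fin (n + 2)) R M)
    (h₀ : ∀ j, B (b 0) (b 1) ∣ B (b 0) (b j)) (h₁ : ∀ j, B (b 0) (b 1) ∣ B (b 1) (b j)) :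
    ∃ b' : Basis (Fin (n + 2)) R M,
      ∀ j : Fin n, B (b' 0) (b' j.succ.succ) = 0 ∧ B (b' 1) (b' j.succ.succ) = 0 := by
  choose q₀ hq₀ using h₀
  choose q₁ hq₁ using h₁
  -- Adding `q₁ j • b 0 - q₀ j • b 1` to `b j` cancels its pairings with `b 0` and `b 1`;
  -- since `T ^ 2 = 0`, the shear `1 + T` is invertible.
  let T : Module.End R M := b.constr R
    (Fin.cons 0 (Fin.cons 0 fun j : Fin n => q₁ j.succ.succ • b 0 - q₀ j.succ.succ • b 1))
  have hT₀ : T (b 0) = 0 := by simp [T]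
  have hT₁ : T (b 1) = 0 := by simp [T]
  have hT : ∀ j : Fin n, T (b j.succ.succ) = q₁ j.succ.succ • b 0 - q₀ j.succ.succ • b 1 := by
    simp [T]
  have hTT : T * T = 0 := by
    refine b.ext fun i => ?_
    induction i using Fin.cases with
    | zero => simp [hT₀]
    | succ i =>
      induction i using Fin.cases with
      | zero => simp [hT₁]
      | succ j => simp [hT, hT₀, hT₁]
  let φ := LinearMap.GeneralLinearGroup.generalLinearEquiv R M
    (IsNilpotent.isUnit_one_add ⟨2, by rw [sq, hTT]⟩).unit
  have hφ : ∀ i, b.map φ i = b i + T (b i) := fun i => by simp [φ]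
  refine ⟨b.map φ, fun j => ?_⟩
  simp only [hφ, hT₀, hT₁, hT, add_zero, map_add, map_sub, map_smul, smul_eq_mul, hB.self_eq_zero]
  rw [hq₀, hq₁, ← hB.neg (b 0) (b 1)]
  constructor <;> ring

theorem Module.Basis.exists_orthogonal_tail [PreValuationRing R] {n : ℕ}
    {B : M →ₗ[R] M →ₗ[R] R} (hB : B.IsAlt) (b : Basis (Fin (n + 2)) R M) :
    ∃ b' : Basis (Fin (n + 2)) R M,
      ∀ j : Fin n, B (b' 0) (b' j.succ.succ) = 0 ∧ B (b' 1) (b' j.succ.succ) = 0 := by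
  classical
  obtain ⟨⟨s, t⟩, hst, hmin⟩ := PreValuationRing.exists_dvd_forall
    ({x | x.1 ≠ x.2} : Finset (Fin (n + 2) × Fin (n + 2))) ⟨(0, 1), by simp⟩
    fun x => B (b x.1) (b x.2)
  have hdvd : ∀ i j, B (b s) (b t) ∣ B (b i) (b j) := by
    intro i j
    rcases eq_or_ne i j with rfl | hij
    · rw [hB.self_eq_zero]
      exact dvd_zero _
    · exact hmin (i, j) (by simpa using hij)
  obtain ⟨σ, hσ₀, hσ₁⟩ := Fin.exists_perm_zero_one (by simpa using hst)
  exact (b.reindex σ.symm).exists_orthogonal_tail_of_dvd hB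
    (by simp [hσ₀, hσ₁, hdvd]) (by simp [hσ₀, hσ₁, hdvd])

theorem LinearMap.IsAlt.exists_basis_isAltNormalForm [PreValuationRing R] {m : ℕ}
    {B : M →ₗ[R] M →ₗ[R] R} (hB : B.IsAlt) (b : Basis (Fin m) R M) :
    ∃ (c : Basis (Fin m) R M) (d : ℕ → R), IsAltNormalForm B c d := by
  induction m using Nat.twoStepInduction generalizing M with
  | zero => exact ⟨b, 0, fun i => i.elim0⟩
  | one => exact ⟨b, 0, fun i j hij => by omega⟩
  | more n ih _ =>
    obtain ⟨b', hb'⟩ := b.exists_orthogonal_tail hB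
    let W := span R (Set.range fun j : Fin n => b' j.succ.succ)
    have hW₀ : W ≤ LinearMap.ker (B (b' 0)) := span_le.mpr (range_subset_iff.mpr fun j => (hb' j).1)
    have hW₁ : W ≤ LinearMap.ker (B (b' 1)) := span_le.mpr (range_subset_iff.mpr fun j => (hb' j).2)
    obtain ⟨c, d, hc⟩ := ih (B := B.domRestrict₁₂ W W) (fun x => hB x) <| Basis.span <|
      b'.linearIndependent.comp _ ((Fin.succ_injective _).comp (Fin.succ_injective _))
    obtain ⟨b'', hb''⟩ := b'.exists_eq_cons_cons c
    exact ⟨b'', _, hb'' ▸ IsAltNormalForm.cons (w := fun j => (c j : M)) hc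
      (fun j => hW₀ (c j).2) (fun j => hW₁ (c j).2)⟩

end NormalForm

theorem stmt8_general (p k m : ℕ) (hp : p.Prime)
    (B : (Fin m → ZMod (p^k)) →ₗ[ZMod (p^k)] (Fin m → ZMod (p^k)) →ₗ[ZMod (p^k)] ZMod (p^k))
    (hB : ∀ a, B a a = 0) :
    ∃ (α : (Fin m → ZMod (p^k)) ≃ₗ[ZMod (p^k)] (Fin m → ZMod (p^k))) (a : ℕ → ℕ),
      (∀ j, a j ≤ k) ∧
      ∀ i j : Fin m, (i : ℕ) < (j : ℕ) →
        B (α (Pi.single i 1)) (α (Pi.single j 1)) =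
          if (j : ℕ) = (i : ℕ) + 1 ∧ (i : ℕ) % 2 = 0
          then (p : ZMod (p^k)) ^ (a ((i : ℕ) / 2)) else 0 := by
  have := ZMod.preValuationRing_prime_pow (k := k) hp
  obtain ⟨c, d, hc⟩ := LinearMap.IsAlt.exists_basis_isAltNormalForm hB (Pi.basisFun _ (Fin m))
  choose a hak u hd using fun r => ZMod.exists_eq_pow_mul_unit hp (d r)
  refine ⟨(c.unitsSMul fun i => if (i : ℕ) % 2 = 1 then (u (i / 2))⁻¹ else 1).equivFun.symm,
    a, hak, fun i j hij => ?_⟩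
  rw [Basis.equivFun_symm_single, Basis.equivFun_symm_single, Basis.unitsSMul_apply,
    Basis.unitsSMul_apply]
  exact hc.unitsSMul u hd i j hij

/-- Normal form for alternating bilinear forms on `(ℤ/p^kℤ)^m`: after a change of basis
`α ∈ GL(m, ℤ/p^kℤ)`, the form is an orthogonal direct sum of 2×2 blocks
`[[0, p^{a_j}], [-p^{a_j}, 0]]` with `0 ≤ a_j ≤ k` (where `p^k = 0` gives zero blocks),
together with at most one zero 1×1 block when `m` is odd: the basis vectors are paired
consecutively `(e_0,e_1), (e_2,e_3), …` and all other pairings vanish. -/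
theorem stmt8 (p k m : ℕ) (hp : p.Prime) (hk : 1 ≤ k)
    (B : (Fin m → ZMod (p^k)) →ₗ[ZMod (p^k)] (Fin m → ZMod (p^k)) →ₗ[ZMod (p^k)] ZMod (p^k))
    (hB : ∀ a, B a a = 0) :
    ∃ (α : (Fin m → ZMod (p^k)) ≃ₗ[ZMod (p^k)] (Fin m → ZMod (p^k))) (a : ℕ → ℕ),
      (∀ j, a j ≤ k) ∧
      ∀ i j : Fin m, (i : ℕ) < (j : ℕ) →
        B (α (Pi.single i 1)) (α (Pi.single j 1)) =
          if (j : ℕ) = (i : ℕ) + 1 ∧ (i : ℕ) % 2 = 0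
          then (p : ZMod (p^k)) ^ (a ((i : ℕ) / 2)) else 0 :=
  stmt8_general p k m hp B hB
end

section
/- Let (.,.): G × G → Z/p^k Z be an alternating bilinear form on G = (Z/p^k Z)^m, and suppose there is a monomorphism φ: G → (Z/p^k Z)^{2g} with (a,b) = (φ(a), φ(b))_{p^k}. Then m + q_1 ≤ 2g, where q_1 is the F_p-dimension of μ({h ∈ G : (h, x) ≡ 0 mod p for all x ∈ G}). -/
open scoped Matrix

open Module

/-! Reduction mod `p` turns `φ` into an injective map `ψ : 𝔽_p^m → 𝔽_p^{2g}`: if `φ x ≡ 0 mod p`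
then `φ (p^{k-1} x) = 0`, so `p^{k-1} x = 0` and `x ≡ 0 mod p`. The image of `ψ` has dimension `m`,
and `ψ` maps the reductions of the `h` with `B(h, ·) ≡ 0 mod p` into its orthogonal for the
symplectic form over `𝔽_p`, which is nondegenerate (`J² = -1`) and so has dimension `2g - m`. -/

section Symplectic

variable (g : ℕ) (R : Type) [CommRing R]

lemma sympJ_transpose : (sympJ g R)ᵀ = -sympJ g R := by
  ext i j
  simp only [Matrix.transpose_apply, Matrix.neg_apply, sympJ]
  by_cases h : (i : ℕ) + (j : ℕ) = 2*g - 1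
  · rw [if_pos h, if_pos (by omega)]
    rcases lt_trichotomy (i : ℕ) j with hij | hij | hij
    · rw [if_neg (by omega), if_pos hij]
    · omega
    · rw [if_pos hij, if_neg (by omega), neg_neg]
  · rw [if_neg h, if_neg (by omega), neg_zero]

lemma sympJ_mul_self : sympJ g R * sympJ g R = -1 := by
  ext i j
  have hi := i.isLt
  let i' : Fin (2*g) := ⟨2*g - 1 - i, by omega⟩
  rw [Matrix.mul_apply, Finset.sum_eq_single i']
  · by_cases hij : i = j
    · subst hij
      simp only [sympJ, i', Matrix.neg_apply, Matrix.one_apply_eq]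
      split_ifs <;> first | omega | simp
    · have : (i' : ℕ) + j ≠ 2*g - 1 := fun h => hij (Fin.ext (by simp [i'] at h; omega))
      simp [sympJ, this, Matrix.one_apply_ne hij]
  · intro l _ hl
    have : (i : ℕ) + l ≠ 2*g - 1 := fun h => hl (Fin.ext (by simp [i']; omega))
    simp [sympJ, this]
  · simp

variable {g R}

lemma symp_anticomm (x y : Fin (2*g) → R) : symp g R x y = -symp g R y x := by
  rw [symp, symp, Matrix.dotProduct_mulVec, ← Matrix.mulVec_transpose, sympJ_transpose,
    Matrix.neg_mulVec, neg_dotProduct, dotProduct_comm]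

lemma sympJ_map {S : Type} [CommRing S] (f : R →+* S) : (sympJ g R).map f = sympJ g S := by
  ext i j
  simp only [Matrix.map_apply, sympJ]
  split_ifs <;> simp

lemma RingHom.map_symp {S : Type} [CommRing S] (f : R →+* S) (x y : Fin (2*g) → R) :
    f (symp g R x y) = symp g S (f ∘ x) (f ∘ y) := by
  rw [symp, symp, RingHom.map_dotProduct, ← sympJ_map f]
  congr 1
  ext i
  exact RingHom.map_mulVec f _ _ i

lemma isUnit_det_sympJ : IsUnit (sympJ g R).det := by
  have h := congrArg Matrix.det (sympJ_mul_self g R)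
  rw [Matrix.det_mul, Matrix.det_neg, Matrix.det_one, Fintype.card_fin, pow_mul, neg_one_sq,
    one_pow, mul_one] at h
  exact IsUnit.of_mul_eq_one _ h

variable (g R) in
def sympForm : LinearMap.BilinForm R (Fin (2*g) → R) := Matrix.toLinearMap₂' R (sympJ g R)

lemma sympForm_apply (x y : Fin (2*g) → R) : sympForm g R x y = symp g R x y :=
  Matrix.toLinearMap₂'_apply' _ x y

variable (g) in
lemma sympForm_nondegenerate (K : Type) [Field K] : (sympForm g K).Nondegenerate :=
  LinearMap.nondegenerate_toLinearMap₂'_iff_det_ne_zero.2 isUnit_det_sympJ.ne_zero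

end Symplectic

lemma LinearMap.BilinForm.finrank_add_finrank_le_of_le_orthogonal {K V : Type*} [Field K]
    [AddCommGroup V] [Module K V] [FiniteDimensional K V] {F : LinearMap.BilinForm K V}
    (hF : F.Nondegenerate) {W S : Submodule K V} (hS : S ≤ F.orthogonal W) :
    finrank K W + finrank K S ≤ finrank K V := by
  have hSW := Submodule.finrank_mono hS
  rw [finrank_orthogonal hF] at hSW
  have := Submodule.finrank_le W
  omega

lemma LinearMap.toMatrix'_map_mulVec_comp {R S ι κ : Type*} [CommRing R] [CommRing S] [Fintype ι]
    [DecidableEq ι] (f : R →+* S) (φ : (ι → R) →ₗ[R] κ → R) (x : ι → R) :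
    (LinearMap.toMatrix' φ).map f *ᵥ (f ∘ x) = f ∘ φ x := by
  ext i
  rw [← RingHom.map_mulVec, LinearMap.toMatrix'_mulVec]
  rfl

section Reduction

variable {p k : ℕ}

lemma ZMod.castHom_pow_eq_zero_iff (hp : 0 < p) (hk : k ≠ 0) (a : ZMod (p^k)) :
    ZMod.castHom (dvd_pow_self p hk) (ZMod p) a = 0 ↔ (p : ZMod (p^k))^(k-1) * a = 0 := by
  have : NeZero (p^k) := ⟨pow_ne_zero k hp.ne'⟩
  obtain ⟨n, rfl⟩ := ZMod.natCast_zmod_surjective a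
  rw [map_natCast, ← Nat.cast_pow, ← Nat.cast_mul, ZMod.natCast_eq_zero_iff,
    ZMod.natCast_eq_zero_iff, ← pow_sub_one_mul hk,
    Nat.mul_dvd_mul_iff_left (pow_pos hp _)]

lemma Matrix.injective_mulVec_map_castHom {ι κ : Type*} [Fintype ι] (hp : 0 < p) (hk : k ≠ 0)
    {A : Matrix κ ι (ZMod (p^k))} (hA : Function.Injective A.mulVec) :
    Function.Injective (A.map (ZMod.castHom (dvd_pow_self p hk) (ZMod p))).mulVec := by
  set r := ZMod.castHom (dvd_pow_self p hk) (ZMod p)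
  have hr := ZMod.castHom_pow_eq_zero_iff hp hk
  refine (injective_iff_map_eq_zero (A.map r).mulVecLin).2 fun v hv => ?_
  obtain ⟨x, rfl⟩ := (ZMod.castHom_surjective (dvd_pow_self p hk)).comp_left v
  have hAx : A *ᵥ ((p : ZMod (p^k))^(k-1) • x) = 0 := by
    rw [Matrix.mulVec_smul]
    ext i
    exact (hr _).1 ((RingHom.map_mulVec r A x i).trans (congrFun hv i))
  have hx : (p : ZMod (p^k))^(k-1) • x = 0 := hA (hAx.trans (Matrix.mulVec_zero A).symm)
  ext j
  exact (hr _).2 (congrFun hx j)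

lemma qinv_eq_finrank_span_castHom [NeZero (p^k)] (hk : k ≠ 0) {m : ℕ}
    (B : (Fin m → ZMod (p^k)) →ₗ[ZMod (p^k)] (Fin m → ZMod (p^k)) →ₗ[ZMod (p^k)] ZMod (p^k))
    (i : ℕ) :
    qinv p k m B i = finrank (ZMod p) (Submodule.span (ZMod p)
      ((ZMod.castHom (dvd_pow_self p hk) (ZMod p) ∘ ·) ''
        {h | ∀ x, ∃ c, B h x = (p : ZMod (p^k))^i * c})) := by
  have hμ : (fun (h : Fin m → ZMod (p^k)) j => (((h j).val : ℕ) : ZMod p)) =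
      (ZMod.castHom (dvd_pow_self p hk) (ZMod p) ∘ ·) := by
    funext h j
    rw [ZMod.natCast_val, Function.comp_apply, ZMod.castHom_apply]
  rw [qinv, hμ]

end Reduction

theorem stmt9_general (p k g m : ℕ) (hp : p.Prime) (hk : 1 ≤ k)
    (B : (Fin m → ZMod (p^k)) →ₗ[ZMod (p^k)] (Fin m → ZMod (p^k)) →ₗ[ZMod (p^k)] ZMod (p^k))
    (φ : (Fin m → ZMod (p^k)) →ₗ[ZMod (p^k)] (Fin (2*g) → ZMod (p^k)))
    (hφ : Function.Injective φ)
    (hφB : ∀ a b, B a b = symp g (ZMod (p^k)) (φ a) (φ b)) :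
    m + qinv p k m B 1 ≤ 2*g := by
  have : Fact p.Prime := ⟨hp⟩
  have hk0 : k ≠ 0 := Nat.one_le_iff_ne_zero.mp hk
  have : NeZero (p^k) := ⟨pow_ne_zero k hp.ne_zero⟩
  set r := ZMod.castHom (dvd_pow_self p hk0) (ZMod p)
  set ψ := ((LinearMap.toMatrix' φ).map r).mulVecLin
  have hψ : Function.Injective ψ := Matrix.injective_mulVec_map_castHom hp.pos hk0 <| by
    rwa [show (LinearMap.toMatrix' φ).mulVec = φ from funext (LinearMap.toMatrix'_mulVec φ)]
  set S := Submodule.span (ZMod p) ((r ∘ ·) '' {h | ∀ x, ∃ c, B h x = (p : ZMod (p^k))^1 * c})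
  have hS : S.map ψ ≤ (sympForm g (ZMod p)).orthogonal (LinearMap.range ψ) := by
    rw [Submodule.map_span, Submodule.span_le]
    rintro _ ⟨_, ⟨h, hh, rfl⟩, rfl⟩ _ ⟨v, rfl⟩
    obtain ⟨x, rfl⟩ := (ZMod.castHom_surjective (dvd_pow_self p hk0)).comp_left v
    obtain ⟨c, hc⟩ := hh x
    show sympForm g (ZMod p) (ψ (r ∘ x)) (ψ (r ∘ h)) = 0
    rw [sympForm_apply, Matrix.mulVecLin_apply, Matrix.mulVecLin_apply,
      LinearMap.toMatrix'_map_mulVec_comp, LinearMap.toMatrix'_map_mulVec_comp,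
      ← RingHom.map_symp, symp_anticomm, ← hφB, hc, map_neg, map_mul, pow_one, map_natCast,
      ZMod.natCast_self, zero_mul, neg_zero]
  have h := LinearMap.BilinForm.finrank_add_finrank_le_of_le_orthogonal
    (sympForm_nondegenerate g (ZMod p)) hS
  rwa [LinearMap.finrank_range_of_inj hψ, (Submodule.equivMapOfInjective ψ hψ S).finrank_eq.symm,
    finrank_fin_fun, finrank_fin_fun, ← qinv_eq_finrank_span_castHom hk0] at h

/-- If an alternating bilinear form on `G = (ℤ/p^kℤ)^m` is induced by a monomorphism
into `(ℤ/p^kℤ)^{2g}` with the standard symplectic form, then `m + q_1 ≤ 2g`. -/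
theorem stmt9 (p k g m : ℕ) (hp : p.Prime) (hk : 1 ≤ k) (hg : 1 ≤ g) (hm : 1 ≤ m)
    (B : (Fin m → ZMod (p^k)) →ₗ[ZMod (p^k)] (Fin m → ZMod (p^k)) →ₗ[ZMod (p^k)] ZMod (p^k))
    (hB : ∀ a, B a a = 0)
    (φ : (Fin m → ZMod (p^k)) →ₗ[ZMod (p^k)] (Fin (2*g) → ZMod (p^k)))
    (hφ : Function.Injective φ)
    (hφB : ∀ a b, B a b = symp g (ZMod (p^k)) (φ a) (φ b)) :
    m + qinv p k m B 1 ≤ 2*g :=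
  stmt9_general p k g m hp hk B φ hφ hφB
end

section
/- Let p be prime and k, m ≥ 1. Given invariants q = (q_1,...,q_k) with 0 ≤ q_k ≤ ... ≤ q_1 ≤ m and q_i ≡ m mod 2, and an integer g with g ≥ (m + q_1)/2, there exists an alternating bilinear form B on G = (Z/p^k Z)^m with invariants q together with a monomorphism φ: G → (Z/p^k Z)^{2g} such that B(a,b) = (φ(a), φ(b))_{p^k}. -/
open scoped Matrix

namespace Stmt17aux

/-- exponent of pair `j` -/
def ee (k : ℕ) (q : ℕ → ℕ) (m j : ℕ) : ℕ :=
  ((Finset.Icc 1 k).filter fun i => (m - q i)/2 ≤ j).card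

theorem ee_le (k : ℕ) (q : ℕ → ℕ) (m j : ℕ) : ee k q m j ≤ k := by
  calc ee k q m j ≤ (Finset.Icc 1 k).card := Finset.card_filter_le _ _
  _ = k := by rw [Nat.card_Icc]; omega

theorem ee_ge_iff (k m : ℕ) (q : ℕ → ℕ)
    (hqmono : ∀ i j, 1 ≤ i → i ≤ j → j ≤ k → q j ≤ q i)
    (i j : ℕ) (hi : 1 ≤ i) (hik : i ≤ k) :
    i ≤ ee k q m j ↔ (m - q i)/2 ≤ j := by
  constructor
  · intro h
    by_contra hc
    push_neg at hc
    have hsub : ((Finset.Icc 1 k).filter fun i' => (m - q i')/2 ≤ j) ⊆ Finset.Icc 1 (i-1) := by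
      intro i' hi'
      simp only [Finset.mem_filter, Finset.mem_Icc] at hi' ⊢
      obtain ⟨⟨h1, h2⟩, h3⟩ := hi'
      refine ⟨h1, ?_⟩
      by_contra hge
      push_neg at hge
      have hii' : i ≤ i' := by omega
      have hq : q i' ≤ q i := hqmono i i' hi hii' h2
      have : (m - q i)/2 ≤ (m - q i')/2 := Nat.div_le_div_right (by omega)
      omega
    have := Finset.card_le_card hsub
    rw [Nat.card_Icc] at this
    unfold ee at h
    omega
  · intro h
    have hsub : Finset.Icc 1 i ⊆ (Finset.Icc 1 k).filter fun i' => (m - q i')/2 ≤ j := by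
      intro i' hi'
      simp only [Finset.mem_Icc] at hi'
      simp only [Finset.mem_filter, Finset.mem_Icc]
      refine ⟨⟨hi'.1, le_trans hi'.2 hik⟩, ?_⟩
      have : q i ≤ q i' := hqmono i' i hi'.1 hi'.2 hik
      have : (m - q i')/2 ≤ (m - q i)/2 := Nat.div_le_div_right (by omega)
      omega
    have := Finset.card_le_card hsub
    rw [Nat.card_Icc] at this
    unfold ee
    omega

variable (p k m : ℕ) (q : ℕ → ℕ)

def i0 (m : ℕ) (j : Fin (m/2)) : Fin m := ⟨2*(j:ℕ), by have := j.isLt; omega⟩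
def i1 (m : ℕ) (j : Fin (m/2)) : Fin m := ⟨2*(j:ℕ)+1, by have := j.isLt; omega⟩

noncomputable def Bform :
    (Fin m → ZMod (p^k)) →ₗ[ZMod (p^k)] (Fin m → ZMod (p^k)) →ₗ[ZMod (p^k)] ZMod (p^k) :=
  LinearMap.mk₂ (ZMod (p^k))
    (fun a b => ∑ j : Fin (m/2), (p : ZMod (p^k))^(ee k q m j) *
        (a (i0 m j) * b (i1 m j) - a (i1 m j) * b (i0 m j)))
    (by intro a a' b
        rw [← Finset.sum_add_distrib]
        refine Finset.sum_congr rfl fun j _ => ?_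
        simp only [Pi.add_apply]; ring)
    (by intro c a b
        rw [smul_eq_mul, Finset.mul_sum]
        refine Finset.sum_congr rfl fun j _ => ?_
        simp only [Pi.smul_apply, smul_eq_mul]; ring)
    (by intro a b b'
        rw [← Finset.sum_add_distrib]
        refine Finset.sum_congr rfl fun j _ => ?_
        simp only [Pi.add_apply]; ring)
    (by intro c a b
        rw [smul_eq_mul, Finset.mul_sum]
        refine Finset.sum_congr rfl fun j _ => ?_
        simp only [Pi.smul_apply, smul_eq_mul]; ring)

theorem Bform_apply (a b : Fin m → ZMod (p^k)) :
    Bform p k m q a b = ∑ j : Fin (m/2), (p : ZMod (p^k))^(ee k q m j) *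
        (a (i0 m j) * b (i1 m j) - a (i1 m j) * b (i0 m j)) := rfl

theorem Bform_alt (a : Fin m → ZMod (p^k)) : Bform p k m q a a = 0 := by
  rw [Bform_apply]
  exact Finset.sum_eq_zero fun j _ => by ring

theorem i0_ne_i1 (j j' : Fin (m/2)) : i0 m j ≠ i1 m j' := by
  intro hc
  have := congrArg Fin.val hc
  simp only [i0, i1] at this
  omega

theorem i1_ne_i1 (j j' : Fin (m/2)) (h : j ≠ j') : i1 m j ≠ i1 m j' := by
  intro hc
  have h2 := congrArg Fin.val hc
  simp only [i1] at h2
  exact h (Fin.ext (by omega))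

theorem i0_ne_i0 (j j' : Fin (m/2)) (h : j ≠ j') : i0 m j ≠ i0 m j' := by
  intro hc
  have h2 := congrArg Fin.val hc
  simp only [i0] at h2
  exact h (Fin.ext (by omega))

theorem Bform_single1 (h : Fin m → ZMod (p^k)) (j : Fin (m/2)) :
    Bform p k m q h (Pi.single (i1 m j) 1) = (p : ZMod (p^k))^(ee k q m j) * h (i0 m j) := by
  rw [Bform_apply]
  rw [Finset.sum_eq_single j]
  · rw [Pi.single_eq_same, Pi.single_eq_of_ne (i0_ne_i1 m j j)]
    ring
  · intro j' _ hj'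
    rw [Pi.single_eq_of_ne (i0_ne_i1 m j' j), Pi.single_eq_of_ne (i1_ne_i1 m j' j hj')]
    ring
  · intro hj; exact absurd (Finset.mem_univ j) hj

theorem Bform_single0 (h : Fin m → ZMod (p^k)) (j : Fin (m/2)) :
    Bform p k m q h (Pi.single (i0 m j) 1) = -((p : ZMod (p^k))^(ee k q m j) * h (i1 m j)) := by
  rw [Bform_apply]
  rw [Finset.sum_eq_single j]
  · rw [Pi.single_eq_same, Pi.single_eq_of_ne (Ne.symm (i0_ne_i1 m j j))]
    ring
  · intro j' _ hj'
    rw [Pi.single_eq_of_ne (Ne.symm (i0_ne_i1 m j j')), Pi.single_eq_of_ne (i0_ne_i0 m j' j hj')]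
    ring
  · intro hj; exact absurd (Finset.mem_univ j) hj

theorem lemA (p k : ℕ) (hp : p.Prime) (hk : 1 ≤ k) (e i : ℕ) (he : e < i) (hik : i ≤ k)
    (h c : ZMod (p^k)) (hc : (p : ZMod (p^k))^e * h = (p : ZMod (p^k))^i * c) :
    p ∣ h.val := by
  haveI : NeZero (p^k) := ⟨by have := hp.pos; positivity⟩
  have hcast : ((p^e * h.val : ℕ) : ZMod (p^k)) = ((p^i * c.val : ℕ) : ZMod (p^k)) := by
    push_cast
    rw [ZMod.natCast_val, ZMod.natCast_val, ZMod.cast_id, ZMod.cast_id]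
    exact hc
  have hmod : (p^e * h.val) ≡ (p^i * c.val) [MOD p^k] := (ZMod.natCast_eq_natCast_iff _ _ _).mp hcast
  have hdvd : ((p:ℤ)^k) ∣ ((p:ℤ)^i * c.val - (p:ℤ)^e * h.val) := by
    have := (Nat.modEq_iff_dvd (n := p^k)).mp hmod
    push_cast at this ⊢
    convert this using 1
  have h1 : ((p:ℤ)^(e+1)) ∣ ((p:ℤ)^e * h.val) := by
    have d1 : ((p:ℤ)^(e+1)) ∣ ((p:ℤ)^i * c.val) :=
      Dvd.dvd.mul_right (pow_dvd_pow _ (by omega)) _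
    have d2 : ((p:ℤ)^(e+1)) ∣ ((p:ℤ)^i * c.val - (p:ℤ)^e * h.val) :=
      dvd_trans (pow_dvd_pow _ (by omega)) hdvd
    have := dvd_sub d1 d2
    simpa using this
  have h2 : (p:ℤ) ∣ (h.val : ℤ) := by
    rw [pow_succ] at h1
    rcases h1 with ⟨d, hd⟩
    refine ⟨d, ?_⟩
    have hpe : ((p:ℤ)^e) ≠ 0 := pow_ne_zero _ (by exact_mod_cast hp.pos.ne')
    have : (p:ℤ)^e * (h.val : ℤ) = (p:ℤ)^e * ((p:ℤ) * d) := by rw [hd]; ring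
    exact mul_left_cancel₀ hpe this
  exact_mod_cast h2

section qinvcomp

variable (hp : p.Prime) (hk : 1 ≤ k) (hm : 1 ≤ m)

/-- membership in the near-radical set from vanishing on constrained coordinates -/
theorem mem_S (i : ℕ) (hi : 1 ≤ i) (hik : i ≤ k)
    (hqmono : ∀ i j, 1 ≤ i → i ≤ j → j ≤ k → q j ≤ q i)
    (hpar : (m - q i) % 2 = 0)
    (h : Fin m → ZMod (p^k)) (hh : ∀ c : Fin m, (c:ℕ) < m - q i → h c = 0) :
    ∀ x, ∃ c, Bform p k m q h x = (p : ZMod (p^k))^i * c := by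
  intro x
  have key : ∀ j : Fin (m/2), ∃ d, (p : ZMod (p^k))^(ee k q m j) *
      (h (i0 m j) * x (i1 m j) - h (i1 m j) * x (i0 m j)) = (p : ZMod (p^k))^i * d := by
    intro j
    by_cases hj : 2*(j:ℕ) < m - q i
    · refine ⟨0, ?_⟩
      rw [hh (i0 m j) (by simp only [i0]; omega), hh (i1 m j) (by simp only [i1]; omega)]
      ring
    · have hee : i ≤ ee k q m j := by
        rw [ee_ge_iff k m q hqmono i (j:ℕ) hi hik]
        omega
      refine ⟨(p : ZMod (p^k))^(ee k q m j - i) *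
        (h (i0 m j) * x (i1 m j) - h (i1 m j) * x (i0 m j)), ?_⟩
      rw [← mul_assoc, ← pow_add]
      congr 2
      omega
  choose d hd using key
  refine ⟨∑ j : Fin (m/2), d j, ?_⟩
  rw [Bform_apply, Finset.mul_sum]
  exact Finset.sum_congr rfl fun j _ => hd j

/-- constrained coordinates of near-radical elements are divisible by p -/
theorem S_constrained (hp : p.Prime) (hk : 1 ≤ k) (i : ℕ) (hi : 1 ≤ i) (hik : i ≤ k)
    (hqmono : ∀ i j, 1 ≤ i → i ≤ j → j ≤ k → q j ≤ q i)
    (hpar : (m - q i) % 2 = 0)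
    (h : Fin m → ZMod (p^k)) (hS : ∀ x, ∃ c, Bform p k m q h x = (p : ZMod (p^k))^i * c)
    (c : Fin m) (hc : (c:ℕ) < m - q i) : p ∣ (h c).val := by
  have hcm : (c:ℕ) < m := c.isLt
  have hjlt : (c:ℕ)/2 < m/2 := by omega
  set j : Fin (m/2) := ⟨(c:ℕ)/2, hjlt⟩ with hjdef
  have hee : ee k q m ((c:ℕ)/2) < i := by
    by_contra hcon
    push_neg at hcon
    have := (ee_ge_iff k m q hqmono i ((c:ℕ)/2) hi hik).mp hcon
    omega
  by_cases hpar2 : (c:ℕ) % 2 = 0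
  · have hceq : i0 m j = c := by
      apply Fin.ext
      simp only [i0, hjdef]
      omega
    obtain ⟨d, hd⟩ := hS (Pi.single (i1 m j) 1)
    rw [Bform_single1, hceq] at hd
    exact lemA p k hp hk _ i hee hik _ d hd
  · have hceq : i1 m j = c := by
      apply Fin.ext
      simp only [i1, hjdef]
      omega
    obtain ⟨d, hd⟩ := hS (Pi.single (i0 m j) 1)
    rw [Bform_single0, hceq] at hd
    have hd' : (p : ZMod (p^k))^(ee k q m ((c:ℕ)/2)) * h c = (p : ZMod (p^k))^i * (-d) := by
      have := neg_eq_iff_eq_neg.mp hd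
      rw [this]; ring
    exact lemA p k hp hk _ i hee hik _ (-d) hd'

end qinvcomp

theorem qinv_eq (p k m : ℕ) (q : ℕ → ℕ) (hp : p.Prime) (hk : 1 ≤ k) (hm : 1 ≤ m)
    (hq1 : ∀ i, 1 ≤ i → i ≤ k → q i ≤ m)
    (hqmono : ∀ i j, 1 ≤ i → i ≤ j → j ≤ k → q j ≤ q i)
    (hqpar : ∀ i, 1 ≤ i → i ≤ k → q i % 2 = m % 2)
    (i : ℕ) (hi : 1 ≤ i) (hik : i ≤ k) :
    qinv p k m (Bform p k m q) i = q i := by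
  haveI : Fact p.Prime := ⟨hp⟩
  haveI : Fact (1 < p^k) := ⟨Nat.one_lt_pow (by omega) hp.one_lt⟩
  have hqm : q i ≤ m := hq1 i hi hik
  have hpar : (m - q i) % 2 = 0 := by have := hqpar i hi hik; omega
  set red : (Fin m → ZMod (p^k)) → (Fin m → ZMod p) :=
    fun h => fun j => (((h j).val : ℕ) : ZMod p) with hred
  set S : Set (Fin m → ZMod (p^k)) :=
    {h | ∀ x, ∃ c, Bform p k m q h x = (p : ZMod (p^k))^i * c} with hS
  set C : Set (Fin m) := {c | m - q i ≤ (c:ℕ)} with hC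
  set f : C → (Fin m → ZMod p) := fun c => Pi.single (c : Fin m) 1 with hf
  have hspan : Submodule.span (ZMod p) (red '' S) = Submodule.span (ZMod p) (Set.range f) := by
    apply le_antisymm
    · rw [Submodule.span_le]
      rintro v ⟨h, hhS, rfl⟩
      have : red h = ∑ c : Fin m, Pi.single c (red h c) := (Finset.univ_sum_single (red h)).symm
      rw [this]
      apply Submodule.sum_mem
      intro c _
      by_cases hc : m - q i ≤ (c:ℕ)
      · have h1 : Pi.single c (red h c) = (red h c) • (Pi.single c 1 : Fin m → ZMod p) := by
          rw [← Pi.single_smul, smul_eq_mul, mul_one]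
        rw [h1]
        have hmem : (Pi.single c 1 : Fin m → ZMod p) ∈ Set.range f := ⟨⟨c, hc⟩, rfl⟩
        exact Submodule.smul_mem _ _ (Submodule.subset_span hmem)
      · have h0 : red h c = 0 := by
          rw [hred]
          exact (ZMod.natCast_eq_zero_iff _ _).mpr
            (S_constrained p k m q hp hk i hi hik hqmono hpar h hhS c (by omega))
        rw [h0, Pi.single_zero]
        exact Submodule.zero_mem _
    · rw [Submodule.span_le]
      rintro v ⟨⟨c, hc⟩, rfl⟩
      apply Submodule.subset_span
      refine ⟨Pi.single c (1 : ZMod (p^k)), ?_, ?_⟩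
      · rw [hS]
        apply mem_S p k m q i hi hik hqmono hpar
        intro c' hc'
        apply Pi.single_eq_of_ne
        intro hcc
        rw [hcc] at hc'
        rw [hC] at hc
        simp only [Set.mem_setOf_eq] at hc
        omega
      · rw [hred, hf]
        funext c'
        by_cases hcc : c' = c
        · subst hcc
          simp only [Pi.single_eq_same, ZMod.val_one, Nat.cast_one]
        · simp only [Pi.single_eq_of_ne hcc, ZMod.val_zero, Nat.cast_zero]
  have hli : LinearIndependent (ZMod p) f := by
    have base : LinearIndependent (ZMod p) (fun c : Fin m => Pi.single c (1 : ZMod p)) := by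
      have := (Pi.basisFun (ZMod p) (Fin m)).linearIndependent
      have heq : ⇑(Pi.basisFun (ZMod p) (Fin m)) =
          fun c : Fin m => Pi.single c (1 : ZMod p) :=
        funext fun c => Pi.basisFun_apply (ZMod p) (Fin m) c
      rwa [heq] at this
    exact base.comp (Subtype.val : C → Fin m) Subtype.val_injective
  have hcard : Fintype.card C = q i := by
    have e : C ≃ Fin (q i) := by
      refine ⟨fun x => ⟨(x.1 : ℕ) - (m - q i), ?_⟩,
        fun y => ⟨⟨(m - q i) + (y : ℕ), ?_⟩, ?_⟩, ?_, ?_⟩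
      · have h1 : (x.1 : ℕ) < m := x.1.isLt
        have h2 : m - q i ≤ (x.1 : ℕ) := x.2
        omega
      · have := y.isLt; omega
      · simp only [hC, Set.mem_setOf_eq]; omega
      · intro x
        apply Subtype.ext
        apply Fin.ext
        have h2 : m - q i ≤ (x.1 : ℕ) := x.2
        simp only []
        omega
      · intro y
        apply Fin.ext
        simp only []
        omega
    rw [Fintype.card_congr e, Fintype.card_fin]
  unfold qinv
  rw [show Set.image (fun h : Fin m → ZMod (p^k) => fun j => (((h j).val : ℕ) : ZMod p))
      {h | ∀ x, ∃ c, Bform p k m q h x = (p : ZMod (p^k))^i * c} = red '' S from rfl]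
  rw [hspan, finrank_span_eq_card hli, hcard]

section phidef

def coef (p k : ℕ) (q : ℕ → ℕ) (m g : ℕ) (s : Fin (2*g)) : ZMod (p^k) :=
  if (s:ℕ) < m/2 then 1
  else if (s:ℕ) < g ∧ (s:ℕ) - m/2 + (m - q 1)/2 < m/2 then 1
  else if (s:ℕ) < g ∧ (s:ℕ) = 2*(m/2) - (m - q 1)/2 ∧ m % 2 = 1 then 1
  else if g ≤ (s:ℕ) ∧ 2*g-1-(s:ℕ) < m/2 then (p : ZMod (p^k))^(ee k q m (2*g-1-(s:ℕ)))
  else 0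

def idx (m g : ℕ) (q : ℕ → ℕ) (hm : 1 ≤ m) (s : Fin (2*g)) : Fin m :=
  if h1 : (s:ℕ) < m/2 then ⟨2*(s:ℕ), by omega⟩
  else if h2 : (s:ℕ) < g ∧ (s:ℕ) - m/2 + (m - q 1)/2 < m/2 then
    ⟨2*((s:ℕ) - m/2 + (m - q 1)/2)+1, by omega⟩
  else if h3 : (s:ℕ) < g ∧ (s:ℕ) = 2*(m/2) - (m - q 1)/2 ∧ m % 2 = 1 then
    ⟨2*(m/2), by omega⟩
  else if h4 : g ≤ (s:ℕ) ∧ 2*g-1-(s:ℕ) < m/2 then ⟨2*(2*g-1-(s:ℕ))+1, by omega⟩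
  else ⟨0, hm⟩

variable {p k m g : ℕ} {q : ℕ → ℕ}

theorem coef_b1 (s : Fin (2*g)) (h1 : (s:ℕ) < m/2) : coef p k q m g s = 1 := by
  rw [coef, if_pos h1]

theorem idx_b1 (hm : 1 ≤ m) (s : Fin (2*g)) (h1 : (s:ℕ) < m/2) :
    idx m g q hm s = ⟨2*(s:ℕ), by omega⟩ := by
  rw [idx, dif_pos h1]

theorem coef_b4 (s : Fin (2*g)) (htg : m/2 ≤ g) (h1 : g ≤ (s:ℕ)) (h2 : 2*g-1-(s:ℕ) < m/2) :
    coef p k q m g s = (p : ZMod (p^k))^(ee k q m (2*g-1-(s:ℕ))) := by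
  rw [coef, if_neg (by omega), if_neg (by omega), if_neg (by omega), if_pos ⟨h1, h2⟩]

theorem idx_b4 (hm : 1 ≤ m) (s : Fin (2*g)) (htg : m/2 ≤ g) (h1 : g ≤ (s:ℕ))
    (h2 : 2*g-1-(s:ℕ) < m/2) :
    idx m g q hm s = ⟨2*(2*g-1-(s:ℕ))+1, by omega⟩ := by
  rw [idx, dif_neg (by omega), dif_neg (by omega), dif_neg (by omega), dif_pos ⟨h1, h2⟩]

theorem coef_b0 (s : Fin (2*g)) (htg : m/2 ≤ g) (h1 : g ≤ (s:ℕ)) (h2 : m/2 ≤ 2*g-1-(s:ℕ)) :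
    coef p k q m g s = 0 := by
  rw [coef, if_neg (by omega), if_neg (by omega), if_neg (by omega), if_neg (by omega)]

theorem coef_b2 (s : Fin (2*g)) (hmid : m/2 ≤ (s:ℕ)) (hg : (s:ℕ) < g)
    (h2 : (s:ℕ) - m/2 + (m - q 1)/2 < m/2) : coef p k q m g s = 1 := by
  rw [coef, if_neg (by omega), if_pos ⟨hg, h2⟩]

theorem idx_b2 (hm : 1 ≤ m) (s : Fin (2*g)) (hmid : m/2 ≤ (s:ℕ)) (hg : (s:ℕ) < g)
    (h2 : (s:ℕ) - m/2 + (m - q 1)/2 < m/2) :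
    idx m g q hm s = ⟨2*((s:ℕ) - m/2 + (m - q 1)/2)+1, by omega⟩ := by
  rw [idx, dif_neg (by omega), dif_pos ⟨hg, h2⟩]

theorem coef_b3 (s : Fin (2*g)) (hg : (s:ℕ) < g)
    (hs : (s:ℕ) = 2*(m/2) - (m - q 1)/2) (hodd : m % 2 = 1) : coef p k q m g s = 1 := by
  rw [coef, if_neg (by omega), if_neg (by omega), if_pos ⟨hg, hs, hodd⟩]

theorem idx_b3 (hm : 1 ≤ m) (s : Fin (2*g)) (hg : (s:ℕ) < g)
    (hs : (s:ℕ) = 2*(m/2) - (m - q 1)/2) (hodd : m % 2 = 1) :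
    idx m g q hm s = ⟨2*(m/2), by omega⟩ := by
  rw [idx, dif_neg (by omega), dif_neg (by omega), dif_pos ⟨hg, hs, hodd⟩]

def sec (m g : ℕ) (q : ℕ → ℕ) (hm : 1 ≤ m)
    (hbig : 2*(m/2) - (m - q 1)/2 + m % 2 ≤ g) (c : Fin m) : Fin (2*g) :=
  if h1 : (c:ℕ) % 2 = 0 ∧ (c:ℕ) < 2*(m/2) then ⟨(c:ℕ)/2, by have := c.isLt; omega⟩
  else if h2 : (c:ℕ) % 2 = 1 ∧ (c:ℕ)/2 < (m - q 1)/2 then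
    ⟨2*g - 1 - (c:ℕ)/2, by have := c.isLt; omega⟩
  else if h3 : (c:ℕ) % 2 = 1 then
    ⟨m/2 + ((c:ℕ)/2 - (m - q 1)/2), by have := c.isLt; omega⟩
  else ⟨2*(m/2) - (m - q 1)/2, by have := c.isLt; omega⟩

end phidef

section phisec

variable {p k m g : ℕ} {q : ℕ → ℕ}

theorem ee_zero (hk : 1 ≤ k)
    (hqmono : ∀ i j, 1 ≤ i → i ≤ j → j ≤ k → q j ≤ q i)
    (j : ℕ) (hj : j < (m - q 1)/2) : ee k q m j = 0 := by
  by_contra hc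
  have h1 : 1 ≤ ee k q m j := by omega
  have := (ee_ge_iff k m q hqmono 1 j le_rfl hk).mp h1
  omega

theorem sec_spec (hk : 1 ≤ k)
    (hqmono : ∀ i j, 1 ≤ i → i ≤ j → j ≤ k → q j ≤ q i)
    (hm : 1 ≤ m) (hbig : 2*(m/2) - (m - q 1)/2 + m % 2 ≤ g) (c : Fin m) :
    coef p k q m g (sec m g q hm hbig c) = 1 ∧ idx m g q hm (sec m g q hm hbig c) = c := by
  have hcm : (c:ℕ) < m := c.isLt
  have htg : m/2 ≤ g := by omega
  by_cases h1 : (c:ℕ) % 2 = 0 ∧ (c:ℕ) < 2*(m/2)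
  · rw [sec, dif_pos h1]
    constructor
    · exact coef_b1 _ (by simp only [Fin.val_mk]; omega)
    · rw [idx_b1 hm _ (by simp only [Fin.val_mk]; omega)]
      apply Fin.ext
      simp only [Fin.val_mk]
      omega
  · by_cases h2 : (c:ℕ) % 2 = 1 ∧ (c:ℕ)/2 < (m - q 1)/2
    · rw [sec, dif_neg h1, dif_pos h2]
      have hs1 : g ≤ 2*g - 1 - (c:ℕ)/2 := by omega
      have hs2 : 2*g - 1 - (2*g - 1 - (c:ℕ)/2) < m/2 := by omega
      constructor
      · rw [coef_b4 _ htg hs1 (by simp only [Fin.val_mk]; omega)]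
        have : 2*g-1-((⟨2*g - 1 - (c:ℕ)/2, by omega⟩ : Fin (2*g)):ℕ) = (c:ℕ)/2 := by
          simp only [Fin.val_mk]
          omega
        rw [this, ee_zero hk hqmono _ (by omega), pow_zero]
      · rw [idx_b4 hm _ htg hs1 (by simp only [Fin.val_mk]; omega)]
        apply Fin.ext
        simp only [Fin.val_mk]
        omega
    · by_cases h3 : (c:ℕ) % 2 = 1
      · rw [sec, dif_neg h1, dif_neg h2, dif_pos h3]
        have hc2 : (c:ℕ)/2 < m/2 := by omega
        have ht1 : (m - q 1)/2 ≤ (c:ℕ)/2 := by omega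
        have hs1 : m/2 ≤ m/2 + ((c:ℕ)/2 - (m - q 1)/2) := by omega
        have hsg : m/2 + ((c:ℕ)/2 - (m - q 1)/2) < g := by omega
        constructor
        · exact coef_b2 _ hs1 hsg (by simp only [Fin.val_mk]; omega)
        · rw [idx_b2 hm _ hs1 hsg (by simp only [Fin.val_mk]; omega)]
          apply Fin.ext
          simp only [Fin.val_mk]
          omega
      · rw [sec, dif_neg h1, dif_neg h2, dif_neg h3]
        have hodd : m % 2 = 1 := by omega
        have hceq : (c:ℕ) = 2*(m/2) := by omega
        have hsg : 2*(m/2) - (m - q 1)/2 < g := by omega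
        constructor
        · exact coef_b3 _ hsg rfl hodd
        · rw [idx_b3 hm _ hsg rfl hodd]
          apply Fin.ext
          simp only [Fin.val_mk]
          omega

end phisec

section phimap

variable (p k m g : ℕ) (q : ℕ → ℕ)

def phi (hm : 1 ≤ m) : (Fin m → ZMod (p^k)) →ₗ[ZMod (p^k)] (Fin (2*g) → ZMod (p^k)) :=
  LinearMap.pi fun s => coef p k q m g s • LinearMap.proj (idx m g q hm s)

theorem phi_apply (hm : 1 ≤ m) (a : Fin m → ZMod (p^k)) (s : Fin (2*g)) :
    phi p k m g q hm a s = coef p k q m g s * a (idx m g q hm s) := by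
  simp [phi, LinearMap.pi_apply, LinearMap.smul_apply, LinearMap.proj_apply, smul_eq_mul]

theorem phi_injective (hk : 1 ≤ k)
    (hqmono : ∀ i j, 1 ≤ i → i ≤ j → j ≤ k → q j ≤ q i)
    (hm : 1 ≤ m) (hbig : 2*(m/2) - (m - q 1)/2 + m % 2 ≤ g) :
    Function.Injective (phi p k m g q hm) := by
  intro a b hab
  funext c
  obtain ⟨hc1, hc2⟩ := sec_spec hk hqmono hm hbig c
  have ha : phi p k m g q hm a (sec m g q hm hbig c) = a c := by
    rw [phi_apply, hc1, hc2, one_mul]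
  have hb : phi p k m g q hm b (sec m g q hm hbig c) = b c := by
    rw [phi_apply, hc1, hc2, one_mul]
  rw [← ha, ← hb, hab]

theorem mulVec_sympJ (R : Type) [CommRing R] (y : Fin (2*g) → R) (s : Fin (2*g)) :
    (sympJ g R).mulVec y s =
      (if (s:ℕ) < g then 1 else -1) * y ⟨2*g-1-(s:ℕ), by have := s.isLt; omega⟩ := by
  have hs := s.isLt
  rw [Matrix.mulVec, dotProduct]
  rw [Finset.sum_eq_single (⟨2*g-1-(s:ℕ), by omega⟩ : Fin (2*g))]
  · rw [sympJ]
    simp only [Fin.val_mk]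
    rw [if_pos (by omega)]
    by_cases hlt : (s:ℕ) < g
    · rw [if_pos (show (s:ℕ) < 2*g-1-(s:ℕ) by omega), if_pos hlt]
    · rw [if_neg (show ¬ (s:ℕ) < 2*g-1-(s:ℕ) by omega), if_neg hlt]
  · intro b _ hb
    rw [sympJ]
    rw [if_neg, zero_mul]
    intro hc
    apply hb
    apply Fin.ext
    simp only [Fin.val_mk]
    omega
  · intro hb
    exact absurd (Finset.mem_univ _) hb

end phimap

section sympid

variable (p k m g : ℕ) (q : ℕ → ℕ)

def FF (a b : Fin m → ZMod (p^k)) (n : ℕ) : ZMod (p^k) :=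
  if h : n < m/2 then (p : ZMod (p^k))^(ee k q m n) * (a ⟨2*n, by omega⟩ * b ⟨2*n+1, by omega⟩)
  else 0

def GG (a b : Fin m → ZMod (p^k)) (n : ℕ) : ZMod (p^k) :=
  if h : n < m/2 then (p : ZMod (p^k))^(ee k q m n) * (a ⟨2*n+1, by omega⟩ * b ⟨2*n, by omega⟩)
  else 0

theorem mulVec_sympJ' (R : Type) [CommRing R] (y : Fin (2*g) → R) (s r : Fin (2*g))
    (hr : (r:ℕ) = 2*g-1-(s:ℕ)) :
    (sympJ g R).mulVec y s = (if (s:ℕ) < g then 1 else -1) * y r := by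
  rw [mulVec_sympJ]
  congr 1
  exact congrArg y (Fin.ext hr.symm)

theorem termwise (hm : 1 ≤ m) (htg : m/2 ≤ g) (a b : Fin m → ZMod (p^k)) (s : Fin (2*g)) :
    phi p k m g q hm a s * ((sympJ g (ZMod (p^k))).mulVec (phi p k m g q hm b) s) =
      FF p k m q a b (s:ℕ) - GG p k m q a b (2*g-1-(s:ℕ)) := by
  have hs := s.isLt
  have hr' : 2*g-1-(s:ℕ) < 2*g := by omega
  set r : Fin (2*g) := ⟨2*g-1-(s:ℕ), hr'⟩ with hrdef
  have hrv : (r:ℕ) = 2*g-1-(s:ℕ) := rfl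
  rw [mulVec_sympJ' g _ _ s r hrv]
  rw [phi_apply, phi_apply]
  by_cases h1 : (s:ℕ) < m/2
  · have hsg : (s:ℕ) < g := by omega
    have h4a : g ≤ (r:ℕ) := by rw [hrv]; omega
    have h4b : 2*g-1-(r:ℕ) < m/2 := by rw [hrv]; omega
    rw [coef_b1 s h1, idx_b1 hm s h1, coef_b4 r htg h4a h4b, idx_b4 hm r htg h4a h4b,
      if_pos hsg]
    have he : 2*g-1-(r:ℕ) = (s:ℕ) := by rw [hrv]; omega
    simp only [he]
    rw [FF, GG, dif_pos h1, dif_neg (show ¬(2*g-1-(s:ℕ) < m/2) by omega)]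
    ring
  · by_cases h2 : (s:ℕ) < g
    · have h0a : g ≤ (r:ℕ) := by rw [hrv]; omega
      have h0b : m/2 ≤ 2*g-1-(r:ℕ) := by rw [hrv]; omega
      rw [coef_b0 r htg h0a h0b]
      rw [FF, GG, dif_neg h1, dif_neg (show ¬(2*g-1-(s:ℕ) < m/2) by omega)]
      ring
    · have hs3 : g ≤ (s:ℕ) := by omega
      by_cases h4 : 2*g-1-(s:ℕ) < m/2
      · have hrlt : (r:ℕ) < m/2 := by rw [hrv]; omega
        rw [coef_b4 s htg hs3 h4, idx_b4 hm s htg hs3 h4, coef_b1 r hrlt, idx_b1 hm r hrlt,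
          if_neg h2]
        simp only [hrv]
        rw [FF, GG, dif_neg (show ¬((s:ℕ) < m/2) by omega), dif_pos h4]
        ring
      · rw [coef_b0 s htg hs3 (by omega)]
        rw [FF, GG, dif_neg h1, dif_neg h4]
        ring

theorem symp_phi (hm : 1 ≤ m) (htg : m/2 ≤ g) (a b : Fin m → ZMod (p^k)) :
    symp g (ZMod (p^k)) (phi p k m g q hm a) (phi p k m g q hm b) = Bform p k m q a b := by
  rw [symp, dotProduct]
  have step1 : ∀ s : Fin (2*g), phi p k m g q hm a s *
      ((sympJ g (ZMod (p^k))).mulVec (phi p k m g q hm b) s) =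
      FF p k m q a b (s:ℕ) - GG p k m q a b (2*g-1-(s:ℕ)) :=
    termwise p k m g q hm htg a b
  calc ∑ s : Fin (2*g), phi p k m g q hm a s *
        ((sympJ g (ZMod (p^k))).mulVec (phi p k m g q hm b) s)
      = ∑ s : Fin (2*g), (FF p k m q a b (s:ℕ) - GG p k m q a b (2*g-1-(s:ℕ))) :=
        Finset.sum_congr rfl fun s _ => step1 s
    _ = ∑ n ∈ Finset.range (2*g), (FF p k m q a b n - GG p k m q a b (2*g-1-n)) :=
        Fin.sum_univ_eq_sum_range (fun n => FF p k m q a b n - GG p k m q a b (2*g-1-n)) (2*g)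
    _ = ∑ n ∈ Finset.range (2*g), FF p k m q a b n -
        ∑ n ∈ Finset.range (2*g), GG p k m q a b (2*g-1-n) := Finset.sum_sub_distrib _ _
    _ = ∑ n ∈ Finset.range (2*g), FF p k m q a b n -
        ∑ n ∈ Finset.range (2*g), GG p k m q a b n := by
          rw [Finset.sum_range_reflect (GG p k m q a b) (2*g)]
    _ = ∑ n ∈ Finset.range (m/2), FF p k m q a b n -
        ∑ n ∈ Finset.range (m/2), GG p k m q a b n := by
          rw [Finset.sum_subset (Finset.range_subset_range.mpr (show m/2 ≤ 2*g by omega))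
            (fun x _ hx => by rw [FF, dif_neg (by simp only [Finset.mem_range] at hx; omega)]),
            Finset.sum_subset (Finset.range_subset_range.mpr (show m/2 ≤ 2*g by omega))
            (fun x _ hx => by rw [GG, dif_neg (by simp only [Finset.mem_range] at hx; omega)])]
    _ = ∑ n ∈ Finset.range (m/2), (FF p k m q a b n - GG p k m q a b n) :=
        (Finset.sum_sub_distrib _ _).symm
    _ = ∑ j : Fin (m/2), (FF p k m q a b (j:ℕ) - GG p k m q a b (j:ℕ)) :=
        (Fin.sum_univ_eq_sum_range (fun n => FF p k m q a b n - GG p k m q a b n) (m/2)).symm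
    _ = Bform p k m q a b := by
        rw [Bform_apply]
        refine Finset.sum_congr rfl fun j _ => ?_
        have hj := j.isLt
        rw [FF, GG, dif_pos hj, dif_pos hj]
        have e0 : (⟨2*(j:ℕ), by omega⟩ : Fin m) = i0 m j := rfl
        have e1 : (⟨2*(j:ℕ)+1, by omega⟩ : Fin m) = i1 m j := rfl
        rw [e0, e1]
        ring

end sympid

theorem stmt17' (p k m g : ℕ) (hp : p.Prime) (hk : 1 ≤ k) (hm : 1 ≤ m) (q : ℕ → ℕ)
    (hq1 : ∀ i, 1 ≤ i → i ≤ k → q i ≤ m)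
    (hqmono : ∀ i j, 1 ≤ i → i ≤ j → j ≤ k → q j ≤ q i)
    (hqpar : ∀ i, 1 ≤ i → i ≤ k → q i % 2 = m % 2)
    (hg : m + q 1 ≤ 2*g) :
    ∃ B : (Fin m → ZMod (p^k)) →ₗ[ZMod (p^k)]
        (Fin m → ZMod (p^k)) →ₗ[ZMod (p^k)] ZMod (p^k),
      (∀ a, B a a = 0) ∧
      (∀ i, 1 ≤ i → i ≤ k → qinv p k m B i = q i) ∧
      ∃ φ : (Fin m → ZMod (p^k)) →ₗ[ZMod (p^k)] (Fin (2*g) → ZMod (p^k)),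
        Function.Injective φ ∧ ∀ a b, B a b = symp g (ZMod (p^k)) (φ a) (φ b) := by
  have hbig : 2*(m/2) - (m - q 1)/2 + m % 2 ≤ g := by
    have h1 := hq1 1 le_rfl hk
    have h2 := hqpar 1 le_rfl hk
    omega
  have htg : m/2 ≤ g := by omega
  exact ⟨Bform p k m q, Bform_alt p k m q,
    fun i hi hik => qinv_eq p k m q hp hk hm hq1 hqmono hqpar i hi hik,
    phi p k m g q hm,
    phi_injective p k m g q hk hqmono hm hbig,
    fun a b => (symp_phi p k m g q hm htg a b).symm⟩

end Stmt17aux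

/-- Given invariants `q = (q_1,…,q_k)` with `0 ≤ q_k ≤ ⋯ ≤ q_1 ≤ m`, `q_i ≡ m (mod 2)`,
and `g ≥ (m + q_1)/2` (i.e. `m + q_1 ≤ 2g`), there is an alternating bilinear form `B`
on `(ℤ/p^kℤ)^m` with invariants `q` together with a monomorphism
`φ : (ℤ/p^kℤ)^m → (ℤ/p^kℤ)^{2g}` inducing `B` from the standard symplectic form. -/
theorem stmt17 (p k m g : ℕ) (hp : p.Prime) (hk : 1 ≤ k) (hm : 1 ≤ m) (q : ℕ → ℕ)
    (hq1 : ∀ i, 1 ≤ i → i ≤ k → q i ≤ m)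
    (hqmono : ∀ i j, 1 ≤ i → i ≤ j → j ≤ k → q j ≤ q i)
    (hqpar : ∀ i, 1 ≤ i → i ≤ k → q i % 2 = m % 2)
    (hg : m + q 1 ≤ 2*g) :
    ∃ B : (Fin m → ZMod (p^k)) →ₗ[ZMod (p^k)]
        (Fin m → ZMod (p^k)) →ₗ[ZMod (p^k)] ZMod (p^k),
      (∀ a, B a a = 0) ∧
      (∀ i, 1 ≤ i → i ≤ k → qinv p k m B i = q i) ∧
      ∃ φ : (Fin m → ZMod (p^k)) →ₗ[ZMod (p^k)] (Fin (2*g) → ZMod (p^k)),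
        Function.Injective φ ∧ ∀ a b, B a b = symp g (ZMod (p^k)) (φ a) (φ b) := by
  exact Stmt17aux.stmt17' p k m g hp hk hm q hq1 hqmono hqpar hg
end
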